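/- arXiv:2202.02127 — 11 statements merged into one kernel-verified Lean document; each statement's English description precedes it below -/
import Mathlib

section
/- Let R be a ring such that for every a in R the element a - a^3 is nilpotent. Then every element of R is the sum of a tripotent and a nilpotent that commute with each other. -/
/-!
Modulo the nilradical of the commutative ring `ℤ[a]`, the element `a` satisfies `a³ = a` and
`6 = 0`, so that ring splits into a part of characteristic 2 and one of characteristic 3. In each part
`a` is a difference of two idempotents, given by explicit polynomials in `a`; lifting these along
the nilradical gives commuting idempotents `e`, `g` in `ℤ[a]`, and `p = e - g` is the tripotent.
-/

open scoped IsMulCommutative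

theorem exists_isIdempotentElem_sub_mem_nilradical {A : Type*} [CommRing A] {t : A}
    (ht : t - t ^ 2 ∈ nilradical A) :
    ∃ e : A, IsIdempotentElem e ∧ e - t ∈ nilradical A := by
  let f := Ideal.Quotient.mk (nilradical A)
  have hker : ∀ x ∈ RingHom.ker f, IsNilpotent x := by
    intro x hx
    rwa [Ideal.mk_ker, mem_nilradical] at hx
  have hidem : IsIdempotentElem (f t) := by
    rw [IsIdempotentElem, ← map_mul, ← sub_eq_zero, ← map_sub, Ideal.Quotient.eq_zero_iff_mem,
      ← neg_sub, ← sq]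
    exact neg_mem ht
  obtain ⟨e, he, hfe⟩ := exists_isIdempotentElem_eq_of_ker_isNilpotent f hker (f t) ⟨t, rfl⟩ hidem
  refine ⟨e, he, ?_⟩
  rwa [← Ideal.Quotient.eq]

theorem IsIdempotentElem.sub_pow_three {A : Type*} [CommRing A] {e g : A}
    (he : IsIdempotentElem e) (hg : IsIdempotentElem g) : (e - g) ^ 3 = e - g := by
  linear_combination (e + 1 - 3 * g) * he.eq + (3 * e - g - 1) * hg.eq

theorem exists_pow_three_eq_self_sub_mem_nilradical {A : Type*} [CommRing A]
    (h6 : (6 : A) ∈ nilradical A) {a : A} (ha : a - a ^ 3 ∈ nilradical A) :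
    ∃ p : A, p ^ 3 = p ∧ a - p ∈ nilradical A := by
  set N := nilradical A
  -- In characteristic 2 these are `a²` and `0`, in characteristic 3 `(a² + a)/2` and `(a² - a)/2`.
  set t := 5 * a ^ 2 + 2 * a
  set s := 2 * a ^ 2 + 4 * a
  have ht : t - t ^ 2 ∈ N := by
    have : t - t ^ 2 = (25 * a + 20) * (a - a ^ 3) - 6 * (4 * a ^ 2 + 3 * a) := by ring
    rw [this]
    exact N.sub_mem (N.mul_mem_left _ ha) (N.mul_mem_right _ h6)
  have hs : s - s ^ 2 ∈ N := by
    have : s - s ^ 2 = (4 * a + 16) * (a - a ^ 3) - 6 * (3 * a ^ 2 + 2 * a) := by ring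
    rw [this]
    exact N.sub_mem (N.mul_mem_left _ ha) (N.mul_mem_right _ h6)
  have hats : a - (t - s) ∈ N := by
    refine mem_nilradical.mpr (IsNilpotent.of_pow (m := 2) (mem_nilradical.mp ?_))
    have : (a - (t - s)) ^ 2 = 6 * (3 * a ^ 2 - 3 * a) + (18 - 9 * a) * (a - a ^ 3) := by ring
    rw [this]
    exact N.add_mem (N.mul_mem_right _ h6) (N.mul_mem_left _ ha)
  obtain ⟨e, he, het⟩ := exists_isIdempotentElem_sub_mem_nilradical ht
  obtain ⟨g, hg, hgs⟩ := exists_isIdempotentElem_sub_mem_nilradical hs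
  refine ⟨e - g, he.sub_pow_three hg, ?_⟩
  have : a - (e - g) = (a - (t - s)) - (e - t) + (g - s) := by ring
  rw [this]
  exact N.add_mem (N.sub_mem hats het) hgs

theorem exists_pow_three_eq_self_commute_isNilpotent_sub {R : Type*} [Ring R]
    (h6 : IsNilpotent (6 : R)) {a : R} (ha : IsNilpotent (a - a ^ 3)) :
    ∃ p : R, p ^ 3 = p ∧ Commute p a ∧ IsNilpotent (a - p) := by
  let S := Algebra.adjoin ℤ {a}
  let a' : S := ⟨a, Algebra.self_mem_adjoin_singleton ℤ a⟩
  have hval : Function.Injective S.val := Subtype.val_injective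
  obtain ⟨p, hp, hap⟩ := exists_pow_three_eq_self_sub_mem_nilradical (a := a')
    (mem_nilradical.mpr <| (IsNilpotent.map_iff hval).mp <| by rwa [map_ofNat])
    (mem_nilradical.mpr <| (IsNilpotent.map_iff hval).mp ha)
  refine ⟨p, congrArg S.val hp, congrArg S.val (mul_comm p a'), ?_⟩
  exact (mem_nilradical.mp hap).map S.val

theorem stmt_1 (R : Type*) [Ring R] (h : ∀ a : R, IsNilpotent (a - a ^ 3)) :
    ∀ a : R, ∃ p w : R, p ^ 3 = p ∧ IsNilpotent w ∧ Commute p w ∧ a = p + w := by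
  intro a
  have h6 : IsNilpotent (6 : R) := by
    simpa [show (2 : R) ^ 3 - 2 = 6 by norm_num] using (h 2).neg
  obtain ⟨p, hp, hpa, hap⟩ := exists_pow_three_eq_self_commute_isNilpotent_sub h6 (h a)
  exact ⟨p, a - p, hp, hap, hpa.sub_right (Commute.refl p), (add_sub_cancel p a).symm⟩
end

section
/- Let R be a ring in which every element is the sum of a tripotent and a nilpotent that commute with each other. Then R is strongly 2-nil-clean, i.e., every element of R is the sum of two idempotents and a nilpotent that pairwise commute. -/
/-- A ring is strongly 2-nil-clean if every element is the sum of two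
idempotents and a nilpotent that pairwise commute. -/
def Strongly2NilClean (R : Type*) [Ring R] : Prop :=
  ∀ a : R, ∃ e f w : R, IsIdempotentElem e ∧ IsIdempotentElem f ∧ IsNilpotent w ∧
    Commute e f ∧ Commute e w ∧ Commute f w ∧ a = e + f + w

/-!
Applying the hypothesis to `2` shows that `6` is nilpotent. By the Chinese remainder theorem
there is an integer `t` that acts as `0` on the `2`-primary part and as `1/2` on the `3`-primary
part of `R`, i.e. `2 t² = t` and `2 (1 + t)` is nilpotent in `R`. A tripotent `p` then splits as
`p² + (p² - p) t + (p - p²) (1 + t)`, two idempotents and a nilpotent, all polynomials in `p`;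
so they commute with everything that commutes with `p`.
-/

theorem Int.exists_six_pow_dvd_two_mul_mul_self_sub_self (n : ℕ) :
    ∃ t : ℤ, 6 ^ n ∣ 2 * t * t - t ∧ 6 ∣ 2 * (1 + t) := by
  obtain ⟨a, b, hab⟩ : IsCoprime ((2 : ℤ) ^ (n + 2)) (3 ^ (n + 1)) :=
    IsCoprime.pow ⟨-1, 1, by norm_num⟩
  have h6 : (6 : ℤ) ^ n = 2 ^ n * 3 ^ n := by rw [← mul_pow]; norm_num
  refine ⟨a * 2 ^ (n + 1), ⟨-(6 * a * b), ?_⟩, ⟨a * 2 ^ (n + 1) + b * 3 ^ n, ?_⟩⟩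
  · linear_combination (a * 2 ^ (n + 1)) * hab + 6 * a * b * h6
  · linear_combination (-2) * hab

section Ring

variable {R : Type*} [Ring R]

theorem exists_intCast_two_mul_mul_self_eq_of_isNilpotent_six (h6 : IsNilpotent (6 : R)) :
    ∃ t : ℤ, 2 * (t : R) * t = t ∧ IsNilpotent (2 * (1 + (t : R))) := by
  obtain ⟨n, hn⟩ := h6
  obtain ⟨t, ⟨a, ha⟩, ⟨b, hb⟩⟩ := Int.exists_six_pow_dvd_two_mul_mul_self_sub_self n
  refine ⟨t, ?_, ?_⟩
  · rw [← sub_eq_zero]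
    have := congrArg (Int.cast : ℤ → R) ha
    push_cast at this
    rw [this, hn, zero_mul]
  · have := congrArg (Int.cast : ℤ → R) hb
    push_cast at this
    rw [this]
    exact (Int.cast_commute b 6).symm.isNilpotent_mul_right ⟨n, hn⟩

theorem isNilpotent_pow_three_sub_of_pow_three_eq {p w : R} (hp : p ^ 3 = p)
    (hw : IsNilpotent w) (hpw : Commute p w) : IsNilpotent ((p + w) ^ 3 - (p + w)) := by
  have key : (p + w) ^ 3 - (p + w) = (3 * p ^ 2 + 3 * p * w + w ^ 2 - 1) * w := by
    simp only [hpw.add_pow, Finset.sum_range_succ, Finset.sum_range_zero]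
    norm_num [hp]
    noncomm_ring
  have hcomm : Commute (3 * p ^ 2 + 3 * p * w + w ^ 2 - 1) w := by
    apply_rules [Commute.add_left, Commute.sub_left, Commute.mul_left, Commute.pow_left,
      Commute.ofNat_left, Commute.one_left, Commute.refl]
  rw [key]
  exact hcomm.isNilpotent_mul_left hw

theorem isNilpotent_of_mul_self_eq_mul {s z : R} (hs : IsNilpotent s) (h : z * z = s * z) :
    IsNilpotent z := by
  have hpow : ∀ n : ℕ, z ^ (n + 1) = s ^ n * z := by
    intro n
    induction n with
    | zero => simp
    | succ n ih => rw [pow_succ, ih, mul_assoc, h, ← mul_assoc, ← pow_succ]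
  obtain ⟨n, hn⟩ := hs
  exact ⟨n + 1, by rw [hpow, hn, zero_mul]⟩

section Tripotent

variable {p : R}

theorem pow_four_of_pow_three_eq (hp : p ^ 3 = p) : p ^ 4 = p ^ 2 := by
  rw [pow_succ, hp, sq]

theorem isIdempotentElem_sq_of_pow_three_eq (hp : p ^ 3 = p) : IsIdempotentElem (p ^ 2) := by
  rw [IsIdempotentElem, ← pow_add, pow_four_of_pow_three_eq hp]

theorem sub_sq_mul_self_of_pow_three_eq (hp : p ^ 3 = p) :
    (p - p ^ 2) * (p - p ^ 2) = -2 * (p - p ^ 2) := by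
  calc (p - p ^ 2) * (p - p ^ 2) = p ^ 2 - 2 * p ^ 3 + p ^ 4 := by noncomm_ring
    _ = -2 * (p - p ^ 2) := by rw [hp, pow_four_of_pow_three_eq hp]; noncomm_ring

theorem isIdempotentElem_sq_sub_mul_intCast (hp : p ^ 3 = p) {t : ℤ}
    (ht : 2 * (t : R) * t = t) : IsIdempotentElem ((p ^ 2 - p) * t) := by
  have hq : (p ^ 2 - p) * (p ^ 2 - p) = 2 * (p ^ 2 - p) := by
    rw [← neg_sub, neg_mul_neg, sub_sq_mul_self_of_pow_three_eq hp]; noncomm_ring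
  calc (p ^ 2 - p) * t * ((p ^ 2 - p) * t) = (p ^ 2 - p) * (p ^ 2 - p) * (t * t) := by
        rw [mul_assoc, ← mul_assoc (t : R), (Int.cast_commute t _).eq]; noncomm_ring
    _ = (p ^ 2 - p) * (2 * t * t) := by rw [hq]; noncomm_ring
    _ = (p ^ 2 - p) * t := by rw [ht]

theorem isNilpotent_sub_sq_mul_one_add_intCast (hp : p ^ 3 = p) {t : ℤ}
    (ht : IsNilpotent (2 * (1 + (t : R)))) : IsNilpotent ((p - p ^ 2) * (1 + t)) := by
  refine isNilpotent_of_mul_self_eq_mul ht.neg ?_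
  have hq := sub_sq_mul_self_of_pow_three_eq hp
  have hc : Commute (1 + (t : R)) (p - p ^ 2) :=
    (Commute.one_left _).add_left (Int.cast_commute t _)
  generalize p - p ^ 2 = q at hq hc ⊢
  generalize (1 + (t : R)) = c at hc ⊢
  calc q * c * (q * c) = q * q * (c * c) := by rw [mul_assoc, ← mul_assoc c, hc.eq]; noncomm_ring
    _ = -2 * (q * c) * c := by rw [hq]; noncomm_ring
    _ = -(2 * c) * (q * c) := by
        rw [neg_mul (2 * c), mul_assoc 2 c, ← mul_assoc c, hc.eq]; noncomm_ring

theorem exists_isIdempotentElem_isNilpotent_of_pow_three_eq (h6 : IsNilpotent (6 : R))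
    (hp : p ^ 3 = p) :
    ∃ e f z : R, IsIdempotentElem e ∧ IsIdempotentElem f ∧ IsNilpotent z ∧ p = e + f + z ∧
      ∀ x, Commute p x → Commute e x ∧ Commute f x ∧ Commute z x := by
  obtain ⟨t, ht, ht'⟩ := exists_intCast_two_mul_mul_self_eq_of_isNilpotent_six h6
  refine ⟨p ^ 2, (p ^ 2 - p) * t, (p - p ^ 2) * (1 + t), isIdempotentElem_sq_of_pow_three_eq hp,
    isIdempotentElem_sq_sub_mul_intCast hp ht, isNilpotent_sub_sq_mul_one_add_intCast hp ht',
    by noncomm_ring, fun x hx => ⟨hx.pow_left 2, ?_, ?_⟩⟩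
  · exact ((hx.pow_left 2).sub_left hx).mul_left (Int.cast_commute t x)
  · exact (hx.sub_left (hx.pow_left 2)).mul_left
      ((Commute.one_left x).add_left (Int.cast_commute t x))

end Tripotent

end Ring

theorem stmt_2 (R : Type*) [Ring R]
    (h : ∀ a : R, ∃ p w : R, p ^ 3 = p ∧ IsNilpotent w ∧ Commute p w ∧ a = p + w) :
    Strongly2NilClean R := by
  have h6 : IsNilpotent (6 : R) := by
    obtain ⟨p, w, hp, hw, hpw, h2⟩ := h 2
    have := isNilpotent_pow_three_sub_of_pow_three_eq hp hw hpw
    rwa [← h2, show (2 : R) ^ 3 - 2 = 6 by norm_num] at this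
  intro a
  obtain ⟨p, w, hp, hw, hpw, rfl⟩ := h a
  obtain ⟨e, f, z, he, hf, hz, rfl, hcomm⟩ :=
    exists_isIdempotentElem_isNilpotent_of_pow_three_eq h6 hp
  obtain ⟨hew, hfw, hzw⟩ := hcomm w hpw
  obtain ⟨-, hfp, hzp⟩ := hcomm _ (Commute.refl _)
  refine ⟨e, f, z + w, he, hf, hzw.isNilpotent_add hz hw, (hcomm f hfp.symm).1,
    (hcomm z hzp.symm).1.add_right hew, (hcomm z hzp.symm).2.1.add_right hfw, by abel⟩
end

section
/- A ring R is strongly 2-nil-clean if and only if every square element of R is the sum of an idempotent and a nilpotent that commute with each other. -/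
section Reduced

variable {D : Type*} [CommRing D] {x : D}

theorem isIdempotentElem_sq_of_pow_three_eq_self (hx : x ^ 3 = x) : IsIdempotentElem (x ^ 2) := by
  unfold IsIdempotentElem
  linear_combination x * hx

theorem isIdempotentElem_sub_sq_of_pow_three_eq_self [IsReduced D] (h6 : (6 : D) = 0)
    (hx : x ^ 3 = x) : IsIdempotentElem (x - x ^ 2) := by
  -- `(3 (x - x²))² = 18 (x² - x)`, which vanishes since `6 = 0`
  have h3 : 3 * (x - x ^ 2) = 0 :=
    IsReduced.eq_zero _ ⟨2, by linear_combination (9 * x - 18) * hx + 3 * (x ^ 2 - x) * h6⟩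
  unfold IsIdempotentElem
  linear_combination (x - 2) * hx - h3

end Reduced

section Nilradical

variable {C : Type*} [CommRing C]

instance : IsReduced (C ⧸ nilradical C) :=
  (Ideal.isRadical_iff_quotient_reduced _).mp (Ideal.radical_isRadical ⊥)

local notation "π" => Ideal.Quotient.mk (nilradical C)

theorem isNilpotent_iff_mk_nilradical_eq_zero {x : C} : IsNilpotent x ↔ π x = 0 := by
  rw [Ideal.Quotient.eq_zero_iff_mem, mem_nilradical]

theorem exists_isIdempotentElem_mk_nilradical_eq {E : C ⧸ nilradical C}
    (hE : IsIdempotentElem E) : ∃ e : C, IsIdempotentElem e ∧ π e = E :=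
  exists_isIdempotentElem_eq_of_ker_isNilpotent _
    (fun x hx => by rwa [Ideal.mk_ker, mem_nilradical] at hx) E (Ideal.Quotient.mk_surjective E) hE

theorem exists_isIdempotentElem_isNilpotent_sub_of_isNilpotent_sq_sub {b : C}
    (hb : IsNilpotent (b ^ 2 - b)) : ∃ e : C, IsIdempotentElem e ∧ IsNilpotent (b - e) := by
  rw [isNilpotent_iff_mk_nilradical_eq_zero, map_sub, map_pow, sub_eq_zero, sq] at hb
  obtain ⟨e, he, hπe⟩ := exists_isIdempotentElem_mk_nilradical_eq hb
  refine ⟨e, he, ?_⟩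
  rw [isNilpotent_iff_mk_nilradical_eq_zero, map_sub, hπe, sub_self]

theorem exists_isIdempotentElem_isNilpotent_sub_add_of_isNilpotent_pow_three_sub {a : C}
    (h6 : IsNilpotent (6 : C)) (ha : IsNilpotent (a ^ 3 - a)) :
    ∃ e f : C, IsIdempotentElem e ∧ IsIdempotentElem f ∧ IsNilpotent (a - (e + f)) := by
  rw [isNilpotent_iff_mk_nilradical_eq_zero, map_ofNat] at h6
  rw [isNilpotent_iff_mk_nilradical_eq_zero, map_sub, map_pow, sub_eq_zero] at ha
  obtain ⟨e, he, hπe⟩ :=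
    exists_isIdempotentElem_mk_nilradical_eq (isIdempotentElem_sq_of_pow_three_eq_self ha)
  obtain ⟨f, hf, hπf⟩ :=
    exists_isIdempotentElem_mk_nilradical_eq (isIdempotentElem_sub_sq_of_pow_three_eq_self h6 ha)
  refine ⟨e, f, he, hf, ?_⟩
  rw [isNilpotent_iff_mk_nilradical_eq_zero, map_sub, map_add, hπe, hπf]
  ring

variable {e f w : C}

theorem isNilpotent_six_of_three_eq_add_add (he : IsIdempotentElem e) (hf : IsIdempotentElem f)
    (hw : IsNilpotent w) (h3 : (3 : C) = e + f + w) : IsNilpotent (6 : C) := by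
  rw [isNilpotent_iff_mk_nilradical_eq_zero] at hw ⊢
  replace h3 := congrArg π h3
  rw [map_add, map_add, hw, add_zero, map_ofNat] at h3
  rw [map_ofNat]
  have hE := he.map π
  have hF := hf.map π
  unfold IsIdempotentElem at hE hF
  linear_combination (π e - 2 + 3 * π f) * hE + (π f - 2 + 3 * π e) * hF +
    ((π e + π f) ^ 2 + 2) * h3

theorem isNilpotent_pow_three_sub_of_isNilpotent_six (he : IsIdempotentElem e)
    (hf : IsIdempotentElem f) (hw : IsNilpotent w) (h6 : IsNilpotent (6 : C)) :
    IsNilpotent ((e + f + w) ^ 3 - (e + f + w)) := by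
  rw [isNilpotent_iff_mk_nilradical_eq_zero] at hw h6 ⊢
  rw [map_ofNat] at h6
  have hE := he.map π
  have hF := hf.map π
  unfold IsIdempotentElem at hE hF
  simp only [map_sub, map_pow, map_add, hw, add_zero]
  linear_combination (π e + 1 + 3 * π f) * hE + (π f + 1 + 3 * π e) * hF + π e * π f * h6

end Nilradical

open scoped IsMulCommutative

section Ring

variable {R : Type*} [Ring R]

theorem isNilpotent_sq_sub_iff_exists_isIdempotentElem_isNilpotent_commute {b : R} :
    IsNilpotent (b ^ 2 - b) ↔
      ∃ e w : R, IsIdempotentElem e ∧ IsNilpotent w ∧ Commute e w ∧ b = e + w := by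
  constructor
  · intro hb
    let S := Subring.closure ({b} : Set R)
    have : IsMulCommutative S := Subring.isMulCommutative_closure (by rintro _ rfl _ rfl; rfl)
    have hbS : b ∈ S := Subring.subset_closure rfl
    obtain ⟨e, he, hbe⟩ := exists_isIdempotentElem_isNilpotent_sub_of_isNilpotent_sq_sub
      (b := ⟨b, hbS⟩) ((IsNilpotent.map_iff S.subtype_injective).mp hb)
    exact ⟨e, b - e, he.map S.subtype, hbe.map S.subtype,
      (Commute.all e ((⟨b, hbS⟩ : S) - e)).map S.subtype, (add_sub_cancel _ _).symm⟩
  · rintro ⟨e, w, he, hw, hew, rfl⟩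
    have : (e + w) ^ 2 - (e + w) = w * (2 * e + w - 1) := by
      rw [sq, add_mul, mul_add, mul_add, he.eq, hew.eq]
      noncomm_ring
    rw [this]
    refine Commute.isNilpotent_mul_right ?_ hw
    exact (((Commute.ofNat_right w 2).mul_right hew.symm).add_right (Commute.refl w)).sub_right
      (Commute.one_right w)

theorem Subring.isMulCommutative_closure_of_commute {e f w : R} (hef : Commute e f)
    (hew : Commute e w) (hfw : Commute f w) : IsMulCommutative (Subring.closure {e, f, w}) := by
  refine Subring.isMulCommutative_closure ?_
  simp only [Set.mem_insert_iff, Set.mem_singleton_iff]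
  rintro x (rfl | rfl | rfl) y (rfl | rfl | rfl) <;> simp only [hef.eq, hew.eq, hfw.eq]

theorem isNilpotent_six_of_commute {e f w : R} (he : IsIdempotentElem e) (hf : IsIdempotentElem f)
    (hw : IsNilpotent w) (hef : Commute e f) (hew : Commute e w) (hfw : Commute f w)
    (h3 : (3 : R) = e + f + w) : IsNilpotent (6 : R) := by
  let S := Subring.closure {e, f, w}
  have : IsMulCommutative S := Subring.isMulCommutative_closure_of_commute hef hew hfw
  have h6 := isNilpotent_six_of_three_eq_add_add (C := S)
    (e := ⟨e, Subring.subset_closure (by simp)⟩) (f := ⟨f, Subring.subset_closure (by simp)⟩)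
    (w := ⟨w, Subring.subset_closure (by simp)⟩)
    (Subtype.ext he) (Subtype.ext hf) ((IsNilpotent.map_iff S.subtype_injective).mp hw)
    (Subtype.ext h3)
  rw [← map_ofNat S.subtype 6]
  exact h6.map S.subtype

theorem isNilpotent_pow_three_sub_of_commute {e f w : R} (he : IsIdempotentElem e)
    (hf : IsIdempotentElem f) (hw : IsNilpotent w) (hef : Commute e f) (hew : Commute e w)
    (hfw : Commute f w) (h6 : IsNilpotent (6 : R)) :
    IsNilpotent ((e + f + w) ^ 3 - (e + f + w)) := by
  let S := Subring.closure {e, f, w}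
  have : IsMulCommutative S := Subring.isMulCommutative_closure_of_commute hef hew hfw
  have ha := isNilpotent_pow_three_sub_of_isNilpotent_six (C := S)
    (e := ⟨e, Subring.subset_closure (by simp)⟩) (f := ⟨f, Subring.subset_closure (by simp)⟩)
    (w := ⟨w, Subring.subset_closure (by simp)⟩)
    (Subtype.ext he) (Subtype.ext hf) ((IsNilpotent.map_iff S.subtype_injective).mp hw)
    (by rwa [← IsNilpotent.map_iff S.subtype_injective, map_ofNat])
  exact ha.map S.subtype

theorem Strongly2NilClean.of_forall_isNilpotent_pow_three_sub
    (H : ∀ a : R, IsNilpotent (a ^ 3 - a)) : Strongly2NilClean R := by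
  intro a
  have h6 : IsNilpotent (6 : R) := by simpa [show (2 : R) ^ 3 - 2 = 6 by norm_num] using H 2
  let S := Subring.closure ({a} : Set R)
  have : IsMulCommutative S := Subring.isMulCommutative_closure (by rintro _ rfl _ rfl; rfl)
  let x : S := ⟨a, Subring.subset_closure rfl⟩
  obtain ⟨e, f, he, hf, hw⟩ :=
    exists_isIdempotentElem_isNilpotent_sub_add_of_isNilpotent_pow_three_sub (a := x)
      (by rwa [← IsNilpotent.map_iff S.subtype_injective, map_ofNat])
      ((IsNilpotent.map_iff S.subtype_injective).mp (H a))
  exact ⟨e, f, a - (e + f), he.map S.subtype, hf.map S.subtype, hw.map S.subtype,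
    (Commute.all e f).map S.subtype, (Commute.all e (x - (e + f))).map S.subtype,
    (Commute.all f (x - (e + f))).map S.subtype, (add_sub_cancel _ _).symm⟩

theorem strongly2NilClean_iff_forall_isNilpotent_pow_three_sub :
    Strongly2NilClean R ↔ ∀ a : R, IsNilpotent (a ^ 3 - a) := by
  refine ⟨fun H a => ?_, Strongly2NilClean.of_forall_isNilpotent_pow_three_sub⟩
  obtain ⟨e, f, w, he, hf, hw, hef, hew, hfw, rfl⟩ := H a
  obtain ⟨e₃, f₃, w₃, he₃, hf₃, hw₃, hef₃, hew₃, hfw₃, h3⟩ := H 3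
  exact isNilpotent_pow_three_sub_of_commute he hf hw hef hew hfw
    (isNilpotent_six_of_commute he₃ hf₃ hw₃ hef₃ hew₃ hfw₃ h3)

theorem forall_isNilpotent_pow_three_sub_iff :
    (∀ a : R, IsNilpotent (a ^ 3 - a)) ↔ ∀ x : R, IsNilpotent ((x ^ 2) ^ 2 - x ^ 2) := by
  refine ⟨fun H x => ?_, fun H a => ?_⟩
  · rw [show (x ^ 2) ^ 2 - x ^ 2 = x * (x ^ 3 - x) by noncomm_ring]
    exact ((Commute.refl x).pow_right 3 |>.sub_right (Commute.refl x)).isNilpotent_mul_left (H x)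
  · refine IsNilpotent.of_pow (m := 2) ?_
    rw [show (a ^ 3 - a) ^ 2 = ((a ^ 2) ^ 2 - a ^ 2) * (a ^ 2 - 1) by noncomm_ring]
    have hy : Commute (a ^ 2) (a ^ 2) := Commute.refl _
    exact (((hy.pow_left 2).sub_left hy).sub_right (Commute.one_right _)).isNilpotent_mul_right
      (H a)

end Ring

theorem stmt_3 (R : Type*) [Ring R] :
    Strongly2NilClean R ↔
      ∀ x : R, ∃ e w : R, IsIdempotentElem e ∧ IsNilpotent w ∧ Commute e w ∧
        x ^ 2 = e + w := by
  rw [strongly2NilClean_iff_forall_isNilpotent_pow_three_sub, forall_isNilpotent_pow_three_sub_iff]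
  simp_rw [isNilpotent_sq_sub_iff_exists_isIdempotentElem_isNilpotent_commute]
end

section
/- A ring R is strongly 2-nil-clean if and only if every square element of R is the sum of two idempotents and a nilpotent that pairwise commute. -/
/-!
The polynomial `t (t - 1) (t - 2)` vanishes on every sum of two commuting idempotents, so it is
nilpotent on every element `e + f + w` of the stated form. If this holds for all squares, then
evaluating at `2²` shows that `24`, hence `6`, is nilpotent, and a Bézout identity over `ℤ[t]`
combining the values at `a²` and `(a + 1)²` makes `a (a - 1) (a - 2)` nilpotent. Inside the
commutative subring generated by `a` and modulo its nilradical, `6 = 0` splits the ring into a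
part where `2 = 0`, on which `a` is idempotent, and a part where `3 = 0`, on which `a` is
tripotent; on both parts `a` is a sum of two idempotents, which lift along the nilradical.
-/

open scoped IsMulCommutative

section Reduced

variable {T : Type*} [CommRing T] [IsReduced T]

theorem mul_sub_one_mul_sub_two_eq_zero_of_sq {b : T} (h6 : (6 : T) = 0)
    (h : b ^ 2 * (b ^ 2 - 1) * (b ^ 2 - 2) = 0)
    (h' : (b + 1) ^ 2 * ((b + 1) ^ 2 - 1) * ((b + 1) ^ 2 - 2) = 0) :
    b * (b - 1) * (b - 2) = 0 := by
  refine sq_eq_zero_iff.mp ?_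
  linear_combination (4 * b ^ 3 + 8 * b + 3) * h + (8 * b ^ 3 + 4 * b) * h'
    + (-2 * b ^ 9 - 8 * b ^ 8 - 16 * b ^ 7 - 15 * b ^ 6 - 5 * b ^ 5 + b ^ 4 - 4 * b ^ 3 + b ^ 2) * h6

theorem exists_isIdempotentElem_add_of_mul_sub_one_mul_sub_two_eq_zero {b : T}
    (h6 : (6 : T) = 0) (hb : b * (b - 1) * (b - 2) = 0) :
    ∃ e f : T, IsIdempotentElem e ∧ IsIdempotentElem f ∧ b = e + f := by
  have h3 : 3 * b * (b - 1) = 0 := by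
    refine sq_eq_zero_iff.mp ?_
    linear_combination 9 * (b - 1) * hb + 3 * b * (b - 1) ^ 2 * h6
  -- `3` and `4` are the idempotents of `ℤ/6` cutting out the parts where `2 = 0` and `3 = 0`;
  -- there `b = (1 + b) + 1` and `b = (b - b²) + b²` respectively.
  refine ⟨3 * (1 + b) + 4 * (b - b ^ 2), 3 + 4 * b ^ 2, ?_, ?_, ?_⟩
  · unfold IsIdempotentElem
    linear_combination (16 * b - 8) * hb - 9 * h3 + (4 * b + 1) * h6
  · unfold IsIdempotentElem
    linear_combination (16 * b + 48) * hb + 44 * h3 + (6 * b + 1) * h6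
  · linear_combination (-1 - b) * h6

end Reduced

theorem IsIdempotentElem.add_mul_sub_one_mul_sub_two_eq_zero {S : Type*} [CommRing S] {e f : S}
    (he : IsIdempotentElem e) (hf : IsIdempotentElem f) :
    (e + f) * (e + f - 1) * (e + f - 2) = 0 := by
  linear_combination (e + 3 * f - 2) * he.eq + (3 * e + f - 2) * hf.eq

section Nilradical

variable {S : Type*} [CommRing S]

local notation "mk" => Ideal.Quotient.mk (nilradical S)

instance : IsReduced (S ⧸ nilradical S) :=
  (Ideal.isRadical_iff_quotient_reduced _).mp (Ideal.radical_isRadical 0)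

theorem mk_nilradical_eq_zero_iff {x : S} : mk x = 0 ↔ IsNilpotent x :=
  Ideal.Quotient.eq_zero_iff_mem.trans mem_nilradical

theorem exists_isIdempotentElem_add_isNilpotent_iff (a : S) :
    (∃ e f w : S, IsIdempotentElem e ∧ IsIdempotentElem f ∧ IsNilpotent w ∧ a = e + f + w) ↔
      ∃ e f : S ⧸ nilradical S, IsIdempotentElem e ∧ IsIdempotentElem f ∧ mk a = e + f := by
  constructor
  · rintro ⟨e, f, w, he, hf, hw, rfl⟩
    refine ⟨mk e, mk f, he.map _, hf.map _, ?_⟩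
    rw [map_add, map_add, mk_nilradical_eq_zero_iff.mpr hw, add_zero]
  · rintro ⟨e, f, he, hf, ha⟩
    have lift := exists_isIdempotentElem_eq_of_ker_isNilpotent (Ideal.Quotient.mk (nilradical S))
      fun x hx ↦ mk_nilradical_eq_zero_iff.mp hx
    obtain ⟨e', he', rfl⟩ := lift e (Ideal.Quotient.mk_surjective e) he
    obtain ⟨f', hf', rfl⟩ := lift f (Ideal.Quotient.mk_surjective f) hf
    refine ⟨e', f', a - e' - f', he', hf', ?_, by abel⟩
    rw [← mk_nilradical_eq_zero_iff, map_sub, map_sub, ha]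
    abel

theorem isNilpotent_mul_sub_one_mul_sub_two_of_eq_add_add {e f w : S}
    (he : IsIdempotentElem e) (hf : IsIdempotentElem f) (hw : IsNilpotent w) :
    IsNilpotent ((e + f + w) * (e + f + w - 1) * (e + f + w - 2)) := by
  obtain ⟨e, f, he, hf, ha⟩ :=
    (exists_isIdempotentElem_add_isNilpotent_iff _).mp ⟨e, f, w, he, hf, hw, rfl⟩
  rw [← mk_nilradical_eq_zero_iff, map_mul, map_mul, map_sub, map_sub, map_one, map_ofNat, ha]
  exact he.add_mul_sub_one_mul_sub_two_eq_zero hf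

theorem exists_eq_add_add_of_isNilpotent_six {a : S} (h6 : IsNilpotent (6 : S))
    (h : IsNilpotent (a ^ 2 * (a ^ 2 - 1) * (a ^ 2 - 2)))
    (h' : IsNilpotent ((a + 1) ^ 2 * ((a + 1) ^ 2 - 1) * ((a + 1) ^ 2 - 2))) :
    ∃ e f w : S, IsIdempotentElem e ∧ IsIdempotentElem f ∧ IsNilpotent w ∧ a = e + f + w := by
  simp only [← mk_nilradical_eq_zero_iff, map_mul, map_sub, map_pow, map_add, map_one,
    map_ofNat] at h6 h h'
  rw [exists_isIdempotentElem_add_isNilpotent_iff]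
  exact exists_isIdempotentElem_add_of_mul_sub_one_mul_sub_two_eq_zero h6
    (mul_sub_one_mul_sub_two_eq_zero_of_sq h6 h h')

end Nilradical

section Ring

variable {R : Type*} [Ring R]

theorem isNilpotent_six_of_isNilpotent_twentyFour (h24 : IsNilpotent (24 : R)) :
    IsNilpotent (6 : R) := by
  refine IsNilpotent.of_pow (m := 3) ?_
  rw [show (6 : R) ^ 3 = 24 * 9 by norm_num]
  exact (Commute.ofNat_left 9 (24 : R)).symm.isNilpotent_mul_right h24

theorem isNilpotent_mul_sub_one_mul_sub_two_of_commute {e f w : R} (he : IsIdempotentElem e)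
    (hf : IsIdempotentElem f) (hw : IsNilpotent w) (hef : Commute e f) (hew : Commute e w)
    (hfw : Commute f w) :
    IsNilpotent ((e + f + w) * (e + f + w - 1) * (e + f + w - 2)) := by
  let S := Subring.closure ({e, f, w} : Set R)
  have : IsMulCommutative S := Subring.isMulCommutative_closure <| by
    simp only [Set.mem_insert_iff, Set.mem_singleton_iff]
    rintro x (rfl | rfl | rfl) y (rfl | rfl | rfl) <;>
      first | exact Commute.refl _ | assumption | exact Commute.symm ‹_›
  let e' : S := ⟨e, Subring.subset_closure (by simp)⟩
  let f' : S := ⟨f, Subring.subset_closure (by simp)⟩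
  let w' : S := ⟨w, Subring.subset_closure (by simp)⟩
  have hw' : IsNilpotent w' := (IsNilpotent.map_iff (f := S.subtype) Subtype.val_injective).mp hw
  have := (isNilpotent_mul_sub_one_mul_sub_two_of_eq_add_add (e := e') (f := f')
    (Subtype.ext he) (Subtype.ext hf) hw').map S.subtype
  simp only [map_mul, map_sub, map_add, map_one, map_ofNat] at this
  exact this

theorem exists_commute_eq_add_add_of_isNilpotent_six (a : R) (h6 : IsNilpotent (6 : R))
    (h : IsNilpotent (a ^ 2 * (a ^ 2 - 1) * (a ^ 2 - 2)))
    (h' : IsNilpotent ((a + 1) ^ 2 * ((a + 1) ^ 2 - 1) * ((a + 1) ^ 2 - 2))) :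
    ∃ e f w : R, IsIdempotentElem e ∧ IsIdempotentElem f ∧ IsNilpotent w ∧
      Commute e f ∧ Commute e w ∧ Commute f w ∧ a = e + f + w := by
  let S := Subring.closure ({a} : Set R)
  have : IsMulCommutative S := Subring.isMulCommutative_closure <| by
    simp only [Set.mem_singleton_iff]
    rintro x rfl y rfl
    rfl
  let a' : S := ⟨a, Subring.subset_closure rfl⟩
  have ha' : S.subtype a' = a := rfl
  have lift {x : S} : IsNilpotent (S.subtype x) → IsNilpotent x :=
    (IsNilpotent.map_iff Subtype.val_injective).mp
  obtain ⟨e, f, w, he, hf, hw, ha⟩ := exists_eq_add_add_of_isNilpotent_six (a := a')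
    (lift (by simpa only [map_ofNat] using h6))
    (lift (by simpa only [map_mul, map_sub, map_pow, map_one, map_ofNat, ha'] using h))
    (lift (by simpa only [map_mul, map_sub, map_pow, map_add, map_one, map_ofNat, ha'] using h'))
  refine ⟨e, f, w, he.map S.subtype, hf.map S.subtype, hw.map S.subtype,
    (Commute.all e f).map S.subtype, (Commute.all e w).map S.subtype,
    (Commute.all f w).map S.subtype, by simpa using congrArg S.subtype ha⟩

end Ring

theorem stmt_4 (R : Type*) [Ring R] :
    Strongly2NilClean R ↔
      ∀ x : R, ∃ e f w : R, IsIdempotentElem e ∧ IsIdempotentElem f ∧ IsNilpotent w ∧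
        Commute e f ∧ Commute e w ∧ Commute f w ∧ x ^ 2 = e + f + w := by
  refine ⟨fun h x ↦ h (x ^ 2), fun H a ↦ ?_⟩
  have hsq (x : R) : IsNilpotent (x ^ 2 * (x ^ 2 - 1) * (x ^ 2 - 2)) := by
    obtain ⟨e, f, w, he, hf, hw, hef, hew, hfw, hx⟩ := H x
    rw [hx]
    exact isNilpotent_mul_sub_one_mul_sub_two_of_commute he hf hw hef hew hfw
  have h24 : IsNilpotent (24 : R) := by
    have := hsq 2
    norm_num at this
    exact this
  exact exists_commute_eq_add_add_of_isNilpotent_six a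
    (isNilpotent_six_of_isNilpotent_twentyFour h24) (hsq a) (hsq (a + 1))
end

section
/- A ring R is strongly 2-nil-clean if and only if every square element of R is the sum of three idempotents and a nilpotent that pairwise commute. -/
open Polynomial Finset
open scoped IsMulCommutative

section CommRing

variable {T : Type*} [CommRing T]

theorem IsIdempotentElem.eval_add (p : T[X]) (t : T) {g : T} (hg : IsIdempotentElem g) :
    p.eval (t + g) = (1 - g) * p.eval t + g * p.eval (t + 1) := by
  obtain ⟨c, hc⟩ := sub_dvd_eval_sub (t + g) t p
  obtain ⟨d, hd⟩ := sub_dvd_eval_sub (t + g) (t + 1) p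
  linear_combination (1 - g) * hc + g * hd + (d - c) * hg.eq

theorem eval_descPochhammer_succ_add_one (n : ℕ) (t : T) :
    (descPochhammer T (n + 1)).eval (t + 1) = (t + 1) * (descPochhammer T n).eval t := by
  simp [descPochhammer_succ_left]

theorem eval_descPochhammer_sum_eq_zero {ι : Type*} (s : Finset ι) {e : ι → T}
    (he : ∀ i ∈ s, IsIdempotentElem (e i)) :
    (descPochhammer T (#s + 1)).eval (∑ i ∈ s, e i) = 0 := by
  classical
  induction s using Finset.induction_on with
  | empty => simp
  | insert j s hj ih =>
    rw [sum_insert hj, card_insert_of_notMem hj, add_comm (e j),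
      (he j (mem_insert_self j s)).eval_add, descPochhammer_succ_eval,
      eval_descPochhammer_succ_add_one, ih fun i hi => he i (mem_insert_of_mem hi)]
    simp

theorem eval_descPochhammer_four (x : T) :
    (descPochhammer T 4).eval x = x * (x - 1) * (x - 2) * (x - 3) := by
  simp [descPochhammer_succ_eval]

theorem isNilpotent_eval_descPochhammer_four_of_isIdempotentElem {e f g w : T}
    (he : IsIdempotentElem e) (hf : IsIdempotentElem f) (hg : IsIdempotentElem g)
    (hw : IsNilpotent w) : IsNilpotent ((descPochhammer T 4).eval (e + f + g + w)) := by
  have hroot : (descPochhammer T 4).eval (e + f + g) = 0 := by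
    simpa [Fin.sum_univ_three, add_assoc] using
      eval_descPochhammer_sum_eq_zero univ (e := ![e, f, g]) (by simp [Fin.forall_fin_succ, *])
  simpa [coe_aeval_eq_eval, hroot] using
    isNilpotent_aeval_sub_of_isNilpotent_sub (descPochhammer T 4)
      (a := e + f + g + w) (b := e + f + g) (by simpa using hw)

theorem pow_three_eq_self_of_forall_sq_mul_sub_eq_zero {D : Type*} [CommRing D] [IsDomain D]
    (h : ∀ x : D, x ^ 2 * (x ^ 2 - 1) * (x ^ 2 - 2) * (x ^ 2 - 3) = 0) (d : D) :
    d ^ 3 = d := by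
  suffices d = 0 ∨ d ^ 2 = 1 by
    rcases this with hd | hd
    · simp [hd]
    · rw [pow_succ, hd, one_mul]
  have h24 : (2 : D) ^ 3 * 3 = 0 := by linear_combination h 2
  rcases mul_eq_zero.mp h24 with h2 | h3
  · have h2 : (2 : D) = 0 := pow_eq_zero_iff three_ne_zero |>.mp h2
    have : (d ^ 2 * (d ^ 2 - 1)) ^ 2 = 0 := by
      linear_combination h d + d ^ 2 * (d ^ 2 - 1) * (2 * d ^ 2 - 3) * h2
    simpa [sub_eq_zero] using this
  · have h' : ∀ z : D, z ^ 4 * (z ^ 2 - 1) * (z ^ 2 + 1) = 0 := fun z => by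
      linear_combination h z + 2 * z ^ 2 * (z ^ 2 - 1) ^ 2 * h3
    rcases mul_eq_zero.mp (h' d) with hd | hd
    · rcases mul_eq_zero.mp hd with hd | hd
      · exact .inl (pow_eq_zero_iff four_ne_zero |>.mp hd)
      · exact .inr (sub_eq_zero.mp hd)
    · -- `d² = -1` is impossible: `z = d + 1` has `z² = 2d`, and then `h' z` reads `20 = 0`.
      have hsq : (d + 1) ^ 2 = 2 * d := by linear_combination hd
      have h20 : (2 * d) ^ 2 * (2 * d - 1) * (2 * d + 1) = 20 := by
        linear_combination (16 * d ^ 2 - 20) * hd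
      have h20' := h' (d + 1)
      rw [show (d + 1) ^ 4 = ((d + 1) ^ 2) ^ 2 by ring, hsq, h20] at h20'
      exact absurd (show (1 : D) = 0 by linear_combination -h20' + 7 * h3) one_ne_zero

theorem exists_eq_isIdempotentElem_add_isIdempotentElem_add_isNilpotent {a : T}
    (ha : IsNilpotent (a ^ 3 - a)) (h6 : IsNilpotent (6 : T)) :
    ∃ e f w : T, IsIdempotentElem e ∧ IsIdempotentElem f ∧ IsNilpotent w ∧ a = e + f + w := by
  let π := Ideal.Quotient.mk (nilradical T)
  have hπ (x : T) : π x = 0 ↔ IsNilpotent x :=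
    Ideal.Quotient.eq_zero_iff_mem.trans mem_nilradical
  have : IsReduced (T ⧸ nilradical T) :=
    (Ideal.isRadical_iff_quotient_reduced _).mp (Ideal.radical_isRadical ⊥)
  have hker : ∀ x ∈ RingHom.ker π, IsNilpotent x := fun x hx => (hπ x).mp hx
  have hb : π a ^ 3 = π a := by simpa [sub_eq_zero] using (hπ _).mpr ha
  have h6' : (6 : T ⧸ nilradical T) = 0 := by rw [← map_ofNat π 6]; exact (hπ 6).mpr h6
  obtain ⟨e, he, hπe⟩ := exists_isIdempotentElem_eq_of_ker_isNilpotent π hker (π a ^ 2)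
    ⟨a ^ 2, map_pow π a 2⟩ (by unfold IsIdempotentElem; linear_combination π a * hb)
  obtain ⟨f, hf, hπf⟩ := exists_isIdempotentElem_eq_of_ker_isNilpotent π hker
    (2 * π a ^ 2 - 2 * π a) ⟨2 * a ^ 2 - 2 * a, by simp [map_ofNat]⟩
    (by
      unfold IsIdempotentElem
      linear_combination (4 * π a - 8) * hb + (π a ^ 2 - π a) * h6')
  refine ⟨e, f, a - e - f, he, hf, ?_, by ring⟩
  have hsq : (3 * (π a - π a ^ 2)) ^ 2 = 0 := by
    linear_combination (9 * π a - 18) * hb + 3 * (π a ^ 2 - π a) * h6'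
  rw [← hπ, map_sub, map_sub, hπe, hπf]
  linear_combination pow_eq_zero_iff two_ne_zero |>.mp hsq

end CommRing

section Ring

variable {R : Type*} [Ring R]

theorem isNilpotent_mul_sub_one_mul_sub_two_mul_sub_three_of_commute {e f g w : R}
    (he : IsIdempotentElem e) (hf : IsIdempotentElem f) (hg : IsIdempotentElem g)
    (hw : IsNilpotent w) (hef : Commute e f) (heg : Commute e g) (hew : Commute e w)
    (hfg : Commute f g) (hfw : Commute f w) (hgw : Commute g w) :
    IsNilpotent ((e + f + g + w) * (e + f + g + w - 1) * (e + f + g + w - 2) *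
      (e + f + g + w - 3)) := by
  let C := Subring.closure ({e, f, g, w} : Set R)
  have : IsMulCommutative C := Subring.isMulCommutative_closure <| by
    simp only [Set.mem_insert_iff, Set.mem_singleton_iff]
    rintro x (rfl | rfl | rfl | rfl) y (rfl | rfl | rfl | rfl) <;>
      first | rfl | assumption | exact Commute.symm ‹_›
  have mem {x : R} (hx : x ∈ ({e, f, g, w} : Set R)) : x ∈ C := Subring.subset_closure hx
  let E : C := ⟨e, mem (by simp)⟩
  let F : C := ⟨f, mem (by simp)⟩
  let G : C := ⟨g, mem (by simp)⟩
  let W : C := ⟨w, mem (by simp)⟩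
  have hW : IsNilpotent W := (IsNilpotent.map_iff (f := C.subtype) Subtype.val_injective).mp hw
  have := isNilpotent_eval_descPochhammer_four_of_isIdempotentElem (e := E) (f := F) (g := G)
    (Subtype.ext he) (Subtype.ext hf) (Subtype.ext hg) hW
  rw [eval_descPochhammer_four] at this
  simpa only [map_mul, map_sub, map_add, map_one, map_ofNat, Subring.coe_subtype] using
    this.map C.subtype

theorem isNilpotent_pow_three_sub_self_of_forall
    (h : ∀ x : R, IsNilpotent (x ^ 2 * (x ^ 2 - 1) * (x ^ 2 - 2) * (x ^ 2 - 3))) (a : R) :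
    IsNilpotent (a ^ 3 - a) := by
  let S := Subring.closure ({a} : Set R)
  have : IsMulCommutative S := Subring.isMulCommutative_closure (by simp)
  let A : S := ⟨a, Subring.subset_closure rfl⟩
  suffices IsNilpotent (A ^ 3 - A) by simpa using this.map S.subtype
  rw [← mem_nilradical, nilradical_eq_sInf, Submodule.mem_sInf]
  rintro P (hP : Ideal.IsPrime P)
  rw [← Ideal.Quotient.eq_zero_iff_mem, map_sub, map_pow, sub_eq_zero]
  refine pow_three_eq_self_of_forall_sq_mul_sub_eq_zero (fun x => ?_) _
  obtain ⟨x, rfl⟩ := Ideal.Quotient.mk_surjective x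
  have hx : IsNilpotent (x ^ 2 * (x ^ 2 - 1) * (x ^ 2 - 2) * (x ^ 2 - 3)) :=
    (IsNilpotent.map_iff (f := S.subtype) Subtype.val_injective).mp
      (by simpa only [map_mul, map_sub, map_pow, map_one, map_ofNat, Subring.coe_subtype] using h x)
  simpa only [map_mul, map_sub, map_pow, map_one, map_ofNat] using
    (hx.map (Ideal.Quotient.mk P)).eq_zero

theorem strongly2NilClean_of_forall_isNilpotent_pow_three_sub_self
    (h : ∀ a : R, IsNilpotent (a ^ 3 - a)) : Strongly2NilClean R := by
  intro a
  let S := Subring.closure ({a} : Set R)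
  have : IsMulCommutative S := Subring.isMulCommutative_closure (by simp)
  have hS (x : S) : IsNilpotent (x ^ 3 - x) :=
    (IsNilpotent.map_iff (f := S.subtype) Subtype.val_injective).mp
      (by simpa only [map_sub, map_pow, Subring.coe_subtype] using h x)
  have h6 : IsNilpotent (6 : S) := by simpa [show (2 : S) ^ 3 - 2 = 6 by norm_num] using hS 2
  obtain ⟨e, f, w, he, hf, hw, hsum⟩ :=
    exists_eq_isIdempotentElem_add_isIdempotentElem_add_isNilpotent
      (hS ⟨a, Subring.subset_closure rfl⟩) h6
  exact ⟨e, f, w, he.map S.subtype, hf.map S.subtype, hw.map S.subtype,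
    (Commute.all e f).map S.subtype, (Commute.all e w).map S.subtype,
    (Commute.all f w).map S.subtype, by simpa using congrArg S.subtype hsum⟩

end Ring

theorem stmt_5 (R : Type*) [Ring R] :
    Strongly2NilClean R ↔
      ∀ x : R, ∃ e f g w : R, IsIdempotentElem e ∧ IsIdempotentElem f ∧
        IsIdempotentElem g ∧ IsNilpotent w ∧
        Commute e f ∧ Commute e g ∧ Commute e w ∧
        Commute f g ∧ Commute f w ∧ Commute g w ∧ x ^ 2 = e + f + g + w := by
  constructor
  · intro h x
    obtain ⟨e, f, w, he, hf, hw, hef, hew, hfw, hx⟩ := h (x ^ 2)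
    exact ⟨e, f, 0, w, he, hf, .zero, hw, hef, .zero_right e, hew, .zero_right f, hfw,
      .zero_left w, by rw [hx, add_zero]⟩
  · intro h
    refine strongly2NilClean_of_forall_isNilpotent_pow_three_sub_self
      (isNilpotent_pow_three_sub_self_of_forall fun x => ?_)
    obtain ⟨e, f, g, w, he, hf, hg, hw, hef, heg, hew, hfg, hfw, hgw, hx⟩ := h x
    rw [hx]
    exact isNilpotent_mul_sub_one_mul_sub_two_mul_sub_three_of_commute
      he hf hg hw hef heg hew hfg hfw hgw
end

section
/- Let R be a ring in which every square element is the sum of three idempotents and a nilpotent that pairwise commute. Then 6 is nilpotent in R. -/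
/-!
Take `x = 2`, so `4 = e + f + g + w`, and work in the commutative subring generated by
`e, f, g, w`. A sum of `n` commuting idempotents is a root of the descending Pochhammer
polynomial `X (X - 1) ⋯ (X - n)`, since on the corners `e A` and `(1 - e) A` adding an
idempotent `e` shifts `a` by `1` and `0` respectively. Hence `e + f + g = 4 - w` is a root of
`X (X - 1) (X - 2) (X - 3)`, which forces `24 = 4 · 3 · 2 · 1` to be a multiple of the
nilpotent `w`. Finally `6 ^ 3 = 9 · 24`.
-/

open Polynomial

section CommRing

variable {A : Type*} [CommRing A]

theorem Polynomial.eval_add_of_isIdempotentElem {e : A} (he : IsIdempotentElem e)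
    (p : A[X]) (a : A) :
    p.eval (e + a) = e * p.eval (a + 1) + (1 - e) * p.eval a := by
  obtain ⟨c, hc⟩ := sub_dvd_eval_sub (e + a) (a + 1) p
  obtain ⟨d, hd⟩ := sub_dvd_eval_sub (e + a) a p
  linear_combination e * hc + (1 - e) * hd + (c - d) * he.eq

theorem descPochhammer_eval_add_of_isIdempotentElem {e a : A} (he : IsIdempotentElem e) {n : ℕ}
    (ha : (descPochhammer A n).eval a = 0) : (descPochhammer A (n + 1)).eval (e + a) = 0 := by
  rw [eval_add_of_isIdempotentElem he, descPochhammer_succ_eval n a, ha, descPochhammer_succ_left]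
  simp [ha]

theorem descPochhammer_eval_multiset_sum_of_isIdempotentElem (s : Multiset A)
    (hs : ∀ e ∈ s, IsIdempotentElem e) :
    (descPochhammer A (Multiset.card s + 1)).eval s.sum = 0 := by
  induction s using Multiset.induction_on with
  | empty => simp
  | cons e s ih =>
    rw [Multiset.card_cons, Multiset.sum_cons]
    exact descPochhammer_eval_add_of_isIdempotentElem (hs e (s.mem_cons_self e))
      (ih fun x hx => hs x (Multiset.mem_cons_of_mem hx))

theorem isNilpotent_eval_of_isNilpotent_sub {x y : A} (p : A[X]) (hx : p.eval x = 0)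
    (hxy : IsNilpotent (y - x)) : IsNilpotent (p.eval y) := by
  obtain ⟨c, hc⟩ := sub_dvd_eval_sub y x p
  rw [hx, sub_zero] at hc
  exact hc ▸ (Commute.all _ _).isNilpotent_mul_right hxy

theorem isNilpotent_descFactorial_of_multiset_sum_add_eq {s : Multiset A}
    (hs : ∀ e ∈ s, IsIdempotentElem e) {w : A} (hw : IsNilpotent w) {k : ℕ}
    (hk : s.sum + w = k) : IsNilpotent (k.descFactorial (Multiset.card s + 1) : A) := by
  rw [← descPochhammer_eval_eq_descFactorial]
  refine isNilpotent_eval_of_isNilpotent_sub _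
    (descPochhammer_eval_multiset_sum_of_isIdempotentElem s hs) ?_
  rwa [← hk, add_sub_cancel_left]

end CommRing

theorem isNilpotent_six_of_isNilpotent_twentyFour_s6 {R : Type*} [Ring R]
    (h : IsNilpotent (24 : R)) : IsNilpotent (6 : R) :=
  IsNilpotent.of_pow (m := 3) <| by
    rw [show (6 : R) ^ 3 = 9 * 24 by norm_num]
    exact (Commute.ofNat_right 9 24).isNilpotent_mul_left h

open scoped IsMulCommutative in
theorem isNilpotent_twentyFour_of_add_eq_four {R : Type*} [Ring R] {e f g w : R}
    (he : IsIdempotentElem e) (hf : IsIdempotentElem f) (hg : IsIdempotentElem g)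
    (hw : IsNilpotent w) (hef : Commute e f) (heg : Commute e g) (hew : Commute e w)
    (hfg : Commute f g) (hfw : Commute f w) (hgw : Commute g w) (h : e + f + g + w = 4) :
    IsNilpotent (24 : R) := by
  set S := Subring.closure ({e, f, g, w} : Set R)
  have : IsMulCommutative S := Subring.isMulCommutative_closure <| by
    simp only [Set.mem_insert_iff, Set.mem_singleton_iff]
    rintro x (rfl | rfl | rfl | rfl) y (rfl | rfl | rfl | rfl) <;>
      first | rfl | exact Commute.eq ‹_› | exact (Commute.eq ‹_›).symm
  have mem (x : R) (hx : x ∈ ({e, f, g, w} : Set R)) : x ∈ S := Subring.subset_closure hx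
  let e' : S := ⟨e, mem e (by simp)⟩
  let f' : S := ⟨f, mem f (by simp)⟩
  let g' : S := ⟨g, mem g (by simp)⟩
  let w' : S := ⟨w, mem w (by simp)⟩
  have hsum : e' + f' + g' + w' = 4 := Subtype.ext h
  have h24 : IsNilpotent (((4 : ℕ).descFactorial 4 : ℕ) : S) :=
    isNilpotent_descFactorial_of_multiset_sum_add_eq (s := {e', f', g'})
      (by simpa using ⟨Subtype.ext he, Subtype.ext hf, Subtype.ext hg⟩)
      (w := w') ((IsNilpotent.map_iff (f := S.subtype) Subtype.val_injective).mp hw)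
      (by simpa [← add_assoc] using hsum)
  exact_mod_cast h24.map S.subtype

theorem stmt_6 (R : Type*) [Ring R]
    (h : ∀ x : R, ∃ e f g w : R, IsIdempotentElem e ∧ IsIdempotentElem f ∧
      IsIdempotentElem g ∧ IsNilpotent w ∧
      Commute e f ∧ Commute e g ∧ Commute e w ∧
      Commute f g ∧ Commute f w ∧ Commute g w ∧ x ^ 2 = e + f + g + w) :
    IsNilpotent (6 : R) := by
  obtain ⟨e, f, g, w, he, hf, hg, hw, hef, heg, hew, hfg, hfw, hgw, hsq⟩ := h 2
  refine isNilpotent_six_of_isNilpotent_twentyFour_s6 <|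
    isNilpotent_twentyFour_of_add_eq_four he hf hg hw hef heg hew hfg hfw hgw ?_
  rw [← hsq]
  norm_num
end

section
/- In the ring Z/5Z, every square element is the sum of four idempotents and a nilpotent that pairwise commute, but Z/5Z is not strongly 2-nil-clean (indeed, 2 - 2^3 is not nilpotent in Z/5Z). -/
lemma zmod5_nilpotent_eq_zero {w : ZMod 5} (h : IsNilpotent w) : w = 0 := by
  haveI : Fact (Nat.Prime 5) := ⟨by norm_num⟩
  exact h.eq_zero

theorem stmt_7 :
    (∀ x : ZMod 5, ∃ e f g k w : ZMod 5, IsIdempotentElem e ∧ IsIdempotentElem f ∧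
      IsIdempotentElem g ∧ IsIdempotentElem k ∧ IsNilpotent w ∧
      Commute e f ∧ Commute e g ∧ Commute e k ∧ Commute e w ∧
      Commute f g ∧ Commute f k ∧ Commute f w ∧
      Commute g k ∧ Commute g w ∧ Commute k w ∧ x ^ 2 = e + f + g + k + w) ∧
    ¬ Strongly2NilClean (ZMod 5) ∧
    ¬ IsNilpotent ((2 : ZMod 5) - 2 ^ 3) := by
  refine ⟨?_, ?_, ?_⟩
  · intro x
    have hx : x ^ 2 = 0 ∨ x ^ 2 = 1 ∨ x ^ 2 = 4 := by revert x; decide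
    rcases hx with h | h | h
    · exact ⟨0, 0, 0, 0, 0, by unfold IsIdempotentElem; decide, by unfold IsIdempotentElem; decide, by unfold IsIdempotentElem; decide,
        by unfold IsIdempotentElem; decide, ⟨1, by simp⟩,
        mul_comm _ _, mul_comm _ _, mul_comm _ _, mul_comm _ _, mul_comm _ _,
        mul_comm _ _, mul_comm _ _, mul_comm _ _, mul_comm _ _, mul_comm _ _,
        by rw [h]; decide⟩
    · exact ⟨1, 0, 0, 0, 0, by unfold IsIdempotentElem; decide, by unfold IsIdempotentElem; decide, by unfold IsIdempotentElem; decide,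
        by unfold IsIdempotentElem; decide, ⟨1, by simp⟩,
        mul_comm _ _, mul_comm _ _, mul_comm _ _, mul_comm _ _, mul_comm _ _,
        mul_comm _ _, mul_comm _ _, mul_comm _ _, mul_comm _ _, mul_comm _ _,
        by rw [h]; decide⟩
    · exact ⟨1, 1, 1, 1, 0, by unfold IsIdempotentElem; decide, by unfold IsIdempotentElem; decide, by unfold IsIdempotentElem; decide,
        by unfold IsIdempotentElem; decide, ⟨1, by simp⟩,
        mul_comm _ _, mul_comm _ _, mul_comm _ _, mul_comm _ _, mul_comm _ _,
        mul_comm _ _, mul_comm _ _, mul_comm _ _, mul_comm _ _, mul_comm _ _,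
        by rw [h]; decide⟩
  · intro h
    obtain ⟨e, f, w, he, hf, hw, -, -, -, hsum⟩ := h 3
    have hw0 : w = 0 := zmod5_nilpotent_eq_zero hw
    subst hw0
    revert hsum he hf
    unfold IsIdempotentElem
    revert e f
    decide
  · intro h
    have := zmod5_nilpotent_eq_zero h
    revert this
    decide
end

section
/- A ring R is Zhou nil-clean if and only if for every a in R the element a - a^5 is nilpotent. -/
/-!
Everything happens in a commutative subring, modulo its nilradical. Two commuting tripotents
`p, q` satisfy `(p + q)⁵ - (p + q) = 15 (p²q + pq²)`, whose square is a multiple of `30`; and `30`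
is nilpotent in a Zhou nil-clean ring because `s⁵ - 5s³ + 4s` vanishes at every sum of two
commuting tripotents and equals `120` at `s = 3`. Conversely, in a commutative ring where `z⁵ = z`
for all `z`, each `z` is the sum of the tripotents `z³ - z` and `2z - z³`, each tripotent is a
difference of two orthogonal idempotents, and orthogonal idempotents lift along nil ideals.
-/

/-- A ring is Zhou nil-clean if every element is the sum of two tripotents
and a nilpotent that pairwise commute. -/
def ZhouNilClean (R : Type*) [Ring R] : Prop :=
  ∀ a : R, ∃ p q w : R, p ^ 3 = p ∧ q ^ 3 = q ∧ IsNilpotent w ∧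
    Commute p q ∧ Commute p w ∧ Commute q w ∧ a = p + q + w

universe u

section Lift
variable {R : Type*} [Ring R]

theorem IsIdempotentElem.sub_pow_three_of_mul_eq_zero {e f : R} (he : IsIdempotentElem e)
    (hf : IsIdempotentElem f) (hef : e * f = 0) (hfe : f * e = 0) : (e - f) ^ 3 = e - f := by
  have hsq : (e - f) * (e - f) = e + f := by
    simp only [sub_mul, mul_sub, he.eq, hf.eq, hef, hfe]; abel
  rw [pow_succ, pow_two, hsq]
  simp only [add_mul, mul_sub, he.eq, hf.eq, hef, hfe]; abel

theorem exists_pow_three_eq_self_eq_sub_of_ker_isNilpotent {S : Type*} [Ring S] (f : R →+* S)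
    (hf : Function.Surjective f) (h : ∀ x ∈ RingHom.ker f, IsNilpotent x) {e₁ e₂ : S}
    (he₁ : IsIdempotentElem e₁) (he₂ : IsIdempotentElem e₂) (h₁₂ : e₁ * e₂ = 0)
    (h₂₁ : e₂ * e₁ = 0) : ∃ t : R, t ^ 3 = t ∧ f t = e₁ - e₂ := by
  obtain ⟨E₂, hE₂, rfl⟩ := exists_isIdempotentElem_eq_of_ker_isNilpotent f h e₂ (hf e₂) he₂
  obtain ⟨E₁, hE₁, rfl, hE₁₂, hE₂₁⟩ := exists_isIdempotentElem_mul_eq_zero_of_ker_isNilpotent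
    f h e₁ (hf e₁) he₁ E₂ hE₂ h₁₂ h₂₁
  exact ⟨E₁ - E₂, hE₁.sub_pow_three_of_mul_eq_zero hE₂ hE₁₂ hE₂₁, map_sub f E₁ E₂⟩

end Lift

section CommRing
variable {T : Type*} [CommRing T]

theorem add_pow_five_sub_of_pow_three_eq_self {p q : T} (hp : p ^ 3 = p) (hq : q ^ 3 = q) :
    (p + q) ^ 5 - (p + q) = 15 * (p ^ 2 * q + p * q ^ 2) := by
  linear_combination (1 + 10 * q ^ 2 + 5 * p * q + p ^ 2) * hp
    + (1 + q ^ 2 + 5 * p * q + 10 * p ^ 2) * hq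

theorem add_pow_five_sub_five_mul_pow_three_of_pow_three_eq_self {p q : T} (hp : p ^ 3 = p)
    (hq : q ^ 3 = q) : (p + q) ^ 5 - 5 * (p + q) ^ 3 + 4 * (p + q) = 0 := by
  linear_combination add_pow_five_sub_of_pow_three_eq_self hp hq - 5 * (hp + hq)

theorem isNilpotent_add_sub_pow_five {p q : T} (h30 : IsNilpotent (30 : T)) (hp : p ^ 3 = p)
    (hq : q ^ 3 = q) : IsNilpotent ((p + q) - (p + q) ^ 5) := by
  rw [← neg_sub, add_pow_five_sub_of_pow_three_eq_self hp hq, isNilpotent_neg_iff]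
  refine IsNilpotent.of_pow (m := 2) ?_
  have hsq : (15 * (p ^ 2 * q + p * q ^ 2)) ^ 2 = 30 * (15 * (p ^ 2 * q ^ 2 + p * q)) := by
    linear_combination (225 * (p * q ^ 2 + 2 * q)) * hp + (225 * (2 * p ^ 3 + p ^ 2 * q)) * hq
  rw [hsq]
  exact (Commute.all _ _).isNilpotent_mul_right h30

theorem isNilpotent_iff_mk_nilradical_eq_zero_s10 {x : T} :
    IsNilpotent x ↔ Ideal.Quotient.mk (nilradical T) x = 0 :=
  mem_nilradical.symm.trans Ideal.Quotient.eq_zero_iff_mem.symm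

section Decomposition
variable {p q w : T} (hp : p ^ 3 = p) (hq : q ^ 3 = q) (hw : IsNilpotent w)
include hp hq hw

theorem isNilpotent_pow_five_sub_five_mul_pow_three_of_decomposition :
    IsNilpotent ((p + q + w) ^ 5 - 5 * (p + q + w) ^ 3 + 4 * (p + q + w)) := by
  rw [isNilpotent_iff_mk_nilradical_eq_zero_s10] at hw ⊢
  simp only [map_add, map_sub, map_mul, map_pow, map_ofNat, hw, add_zero]
  exact add_pow_five_sub_five_mul_pow_three_of_pow_three_eq_self
    (by rw [← map_pow, hp]) (by rw [← map_pow, hq])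

theorem isNilpotent_sub_pow_five_of_decomposition (h30 : IsNilpotent (30 : T)) :
    IsNilpotent ((p + q + w) - (p + q + w) ^ 5) := by
  have hpq := isNilpotent_add_sub_pow_five h30 hp hq
  rw [isNilpotent_iff_mk_nilradical_eq_zero_s10] at hw hpq ⊢
  simpa only [map_add, map_sub, map_pow, hw, add_zero] using hpq

end Decomposition

section PowFive
variable (h5 : ∀ z : T, z ^ 5 = z)
include h5

theorem thirty_eq_zero_of_pow_five : (30 : T) = 0 := by
  linear_combination h5 2

theorem fifteen_mul_sq_sub_self_of_pow_five (z : T) : 15 * (z ^ 2 - z) = 0 := by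
  linear_combination 3 * z * (h5 (z + 1) - h5 z) - 15 * h5 z
    - (z ^ 4 + z ^ 3 + z) * thirty_eq_zero_of_pow_five h5

theorem five_mul_pow_three_sub_self_of_pow_five (z : T) : 5 * (z ^ 3 - z) = 0 := by
  linear_combination (z + 1) * fifteen_mul_sq_sub_self_of_pow_five h5 z
    + (h5 (z + 1) - h5 z) + (h5 (z - 1) - h5 z) - z ^ 3 * thirty_eq_zero_of_pow_five h5

theorem pow_three_sub_self_pow_three_of_pow_five (z : T) : (z ^ 3 - z) ^ 3 = z ^ 3 - z := by
  linear_combination (z ^ 4 - 3 * z ^ 2 + 4) * h5 z - five_mul_pow_three_sub_self_of_pow_five h5 z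

theorem two_mul_sub_pow_three_pow_three_of_pow_five (z : T) :
    (2 * z - z ^ 3) ^ 3 = 2 * z - z ^ 3 := by
  linear_combination (6 * z ^ 2 - z ^ 4 - 13) * h5 z
    + 3 * five_mul_pow_three_sub_self_of_pow_five h5 z

/-- As `30 = 0`, the idempotents `15`, `10`, `6` split `T` into factors of characteristic `2`, `3`,
`5`; the two idempotents are `t` and `0` on the first factor and `(t² ± t) / 2` on the others. -/
theorem exists_isIdempotentElem_sub_of_pow_five {t : T} (ht : t ^ 3 = t) :
    ∃ e₁ e₂ : T, IsIdempotentElem e₁ ∧ IsIdempotentElem e₂ ∧ e₁ * e₂ = 0 ∧ t = e₁ - e₂ := by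
  have h30 := thirty_eq_zero_of_pow_five h5
  refine ⟨8 * t ^ 2 + 23 * t, 8 * t ^ 2 + 22 * t, ?_, ?_, ?_, by ring⟩
  · show _ * _ = _
    linear_combination (64 * t + 368) * ht + 39 * fifteen_mul_sq_sub_self_of_pow_five h5 t
      + 31 * t * h30
  · show _ * _ = _
    linear_combination (64 * t + 352) * ht + (18 * t ^ 2 + 11 * t) * h30
  · linear_combination (64 * t + 360) * ht + (19 * t ^ 2 + 12 * t) * h30

end PowFive

section NilQuotient
variable (h : ∀ y : T, IsNilpotent (y - y ^ 5))
include h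

theorem pow_five_eq_self_of_isNilpotent_sub_pow_five (z : T ⧸ nilradical T) : z ^ 5 = z := by
  obtain ⟨y, rfl⟩ := Ideal.Quotient.mk_surjective z
  have hy := isNilpotent_iff_mk_nilradical_eq_zero_s10.1 (h y)
  rw [map_sub, map_pow, sub_eq_zero] at hy
  exact hy.symm

theorem exists_pow_three_eq_self_mk_eq {t : T ⧸ nilradical T} (ht : t ^ 3 = t) :
    ∃ t' : T, t' ^ 3 = t' ∧ Ideal.Quotient.mk (nilradical T) t' = t := by
  obtain ⟨e₁, e₂, he₁, he₂, h₁₂, rfl⟩ :=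
    exists_isIdempotentElem_sub_of_pow_five (pow_five_eq_self_of_isNilpotent_sub_pow_five h) ht
  exact exists_pow_three_eq_self_eq_sub_of_ker_isNilpotent _ Ideal.Quotient.mk_surjective
    (fun x hx => isNilpotent_iff_mk_nilradical_eq_zero_s10.2 hx) he₁ he₂ h₁₂ (by rw [mul_comm, h₁₂])

theorem exists_decomposition_of_isNilpotent_sub_pow_five (a : T) :
    ∃ p q w : T, p ^ 3 = p ∧ q ^ 3 = q ∧ IsNilpotent w ∧ a = p + q + w := by
  have h5 := pow_five_eq_self_of_isNilpotent_sub_pow_five h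
  obtain ⟨p, hp, hfp⟩ := exists_pow_three_eq_self_mk_eq h
    (pow_three_sub_self_pow_three_of_pow_five h5 (Ideal.Quotient.mk _ a))
  obtain ⟨q, hq, hfq⟩ := exists_pow_three_eq_self_mk_eq h
    (two_mul_sub_pow_three_pow_three_of_pow_five h5 (Ideal.Quotient.mk _ a))
  refine ⟨p, q, a - p - q, hp, hq, ?_, by ring⟩
  rw [isNilpotent_iff_mk_nilradical_eq_zero_s10, map_sub, map_sub, hfp, hfq]
  ring

end NilQuotient

end CommRing

section Transfer
variable {R : Type u} [Ring R]

open scoped IsMulCommutative in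
theorem exists_commRing_of_commute {s : Set R} (hs : ∀ x ∈ s, ∀ y ∈ s, Commute x y) :
    ∃ (T : Type u) (_ : CommRing T) (φ : T →+* R), Function.Injective φ ∧ s ⊆ Set.range φ := by
  have := Subring.isMulCommutative_closure fun x hx y hy => (hs x hx y hy).eq
  exact ⟨Subring.closure s, inferInstance, (Subring.closure s).subtype, Subtype.val_injective,
    fun x hx => ⟨⟨x, Subring.subset_closure hx⟩, rfl⟩⟩

theorem exists_commRing_of_decomposition {p q w : R} (hp : p ^ 3 = p) (hq : q ^ 3 = q)
    (hw : IsNilpotent w) (hpq : Commute p q) (hpw : Commute p w) (hqw : Commute q w) :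
    ∃ (T : Type u) (_ : CommRing T) (φ : T →+* R), Function.Injective φ ∧
      ∃ p' q' w' : T, p' ^ 3 = p' ∧ q' ^ 3 = q' ∧ IsNilpotent w' ∧
        φ (p' + q' + w') = p + q + w := by
  obtain ⟨T, _, φ, hφ, hs⟩ := exists_commRing_of_commute (s := {p, q, w})
    (by simp [hpq, hpw, hqw, hpq.symm, hpw.symm, hqw.symm])
  obtain ⟨p', rfl⟩ : p ∈ Set.range φ := hs (by simp)
  obtain ⟨q', rfl⟩ : q ∈ Set.range φ := hs (by simp)
  obtain ⟨w', rfl⟩ : w ∈ Set.range φ := hs (by simp)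
  exact ⟨T, _, φ, hφ, p', q', w', hφ (by rw [map_pow, hp]), hφ (by rw [map_pow, hq]),
    (IsNilpotent.map_iff hφ).1 hw, by simp only [map_add]⟩

theorem ZhouNilClean.isNilpotent_thirty (h : ZhouNilClean R) : IsNilpotent (30 : R) := by
  obtain ⟨p, q, w, hp, hq, hw, hpq, hpw, hqw, h3⟩ := h 3
  obtain ⟨T, _, φ, -, p', q', w', hp', hq', hw', hφ⟩ :=
    exists_commRing_of_decomposition hp hq hw hpq hpw hqw
  have h120 : IsNilpotent (120 : R) := by
    have := (isNilpotent_pow_five_sub_five_mul_pow_three_of_decomposition hp' hq' hw').map φ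
    rwa [map_add, map_sub, map_mul, map_mul, map_pow, map_pow, map_ofNat, map_ofNat, hφ, ← h3,
      show (3 : R) ^ 5 - 5 * 3 ^ 3 + 4 * 3 = 120 by norm_num] at this
  refine IsNilpotent.of_pow (m := 3) ?_
  rw [show (30 : R) ^ 3 = 225 * 120 by norm_num]
  exact (Commute.ofNat_left 225 120).isNilpotent_mul_left h120

theorem ZhouNilClean.isNilpotent_sub_pow_five (h : ZhouNilClean R) (a : R) :
    IsNilpotent (a - a ^ 5) := by
  obtain ⟨p, q, w, hp, hq, hw, hpq, hpw, hqw, rfl⟩ := h a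
  obtain ⟨T, _, φ, hφ, p', q', w', hp', hq', hw', hφpqw⟩ :=
    exists_commRing_of_decomposition hp hq hw hpq hpw hqw
  have h30 : IsNilpotent (30 : T) :=
    (IsNilpotent.map_iff hφ).1 (by rw [map_ofNat]; exact h.isNilpotent_thirty)
  simpa [hφpqw] using (isNilpotent_sub_pow_five_of_decomposition hp' hq' hw' h30).map φ

theorem zhouNilClean_of_isNilpotent_sub_pow_five (h : ∀ a : R, IsNilpotent (a - a ^ 5)) :
    ZhouNilClean R := by
  intro a
  obtain ⟨T, _, φ, hφ, hs⟩ := exists_commRing_of_commute (s := {a}) (by simp)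
  obtain ⟨a', rfl⟩ := hs rfl
  obtain ⟨p, q, w, hp, hq, hw, rfl⟩ := exists_decomposition_of_isNilpotent_sub_pow_five
    (fun y => (IsNilpotent.map_iff hφ).1 (by simpa using h (φ y))) a'
  exact ⟨φ p, φ q, φ w, by rw [← map_pow, hp], by rw [← map_pow, hq], hw.map φ,
    (Commute.all p q).map φ, (Commute.all p w).map φ, (Commute.all q w).map φ,
    by simp only [map_add]⟩

end Transfer

theorem stmt_10 (R : Type*) [Ring R] :
    ZhouNilClean R ↔ ∀ a : R, IsNilpotent (a - a ^ 5) :=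
  ⟨ZhouNilClean.isNilpotent_sub_pow_five, zhouNilClean_of_isNilpotent_sub_pow_five⟩
end

section
/- A ring R is Zhou nil-clean if and only if 7 is invertible in R and every square element of R is the sum of four idempotents and a nilpotent that pairwise commute. -/
open Finset Polynomial

universe u

section CommRing

variable {S : Type u} [CommRing S]

theorem isNilpotent_of_forall_map_eq_zero {x : S}
    (h : ∀ (D : Type u) [CommRing D] [IsDomain D] (φ : S →+* D), φ x = 0) : IsNilpotent x :=
  nilpotent_iff_mem_prime.2 fun P _ => Ideal.Quotient.eq_zero_iff_mem.1 (h _ (Ideal.Quotient.mk P))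

theorem IsNilpotent.map_eq_zero {D : Type*} [CommRing D] [IsDomain D] {x : S}
    (hx : IsNilpotent x) (φ : S →+* D) : φ x = 0 :=
  (hx.map φ).eq_zero

theorem exists_mem_map_eq_intCast {D : Type*} [CommRing D] [IsDomain D] {C : Finset ℤ} {x : S}
    (hx : IsNilpotent (∏ c ∈ C, (x - c))) (φ : S →+* D) : ∃ c ∈ C, φ x = c := by
  simpa [prod_eq_zero_iff, sub_eq_zero] using hx.map_eq_zero φ

theorem prod_Icc_zero_one_sub (x : S) : ∏ c ∈ Icc (0 : ℤ) 1, (x - c) = x ^ 2 - x := by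
  rw [show Icc (0 : ℤ) 1 = {0, 1} by decide]
  simp
  ring

theorem prod_Icc_neg_one_one_sub (x : S) : ∏ c ∈ Icc (-1 : ℤ) 1, (x - c) = x ^ 3 - x := by
  rw [show Icc (-1 : ℤ) 1 = {-1, 0, 1} by decide]
  simp
  ring

theorem aeval_prod_X_sub_C (a : S) (C : Finset ℤ) :
    aeval a (∏ c ∈ C, (X - Polynomial.C c)) = ∏ c ∈ C, (a - c) := by
  simp [map_prod]

theorem isNilpotent_aeval_of_forall_dvd_eval {N : ℤ} {C : Finset ℤ} {a : S}
    (hN : IsNilpotent (N : S)) (ha : IsNilpotent (∏ c ∈ C, (a - c))) {f : ℤ[X]}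
    (hf : ∀ c ∈ C, N ∣ f.eval c) : IsNilpotent (aeval a f) := by
  refine isNilpotent_of_forall_map_eq_zero fun D _ _ φ => ?_
  obtain ⟨c, hc, hac⟩ := exists_mem_map_eq_intCast ha φ
  obtain ⟨k, hk⟩ := hf c hc
  have hN' : (N : D) = 0 := by simpa using hN.map_eq_zero φ
  have hφ : φ (aeval a f) = aeval (φ a) f := (aeval_algHom_apply φ.toIntAlgHom a f).symm
  rw [hφ, hac, ← eq_intCast (algebraMap ℤ D), aeval_algebraMap_apply_eq_algebraMap_eval, hk,
    map_mul, eq_intCast, hN', zero_mul]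

theorem exists_isIdempotentElem_isNilpotent_sub {u : S} (hu : IsNilpotent (u ^ 2 - u)) :
    ∃ e, IsIdempotentElem e ∧ IsNilpotent (e - u) := by
  let π := Ideal.Quotient.mk (nilradical S)
  have hπ (x : S) : π x = 0 ↔ IsNilpotent x :=
    Ideal.Quotient.eq_zero_iff_mem.trans mem_nilradical
  obtain ⟨e, he, heu⟩ := exists_isIdempotentElem_eq_of_ker_isNilpotent π
    (fun x hx => (hπ x).1 hx) (π u) ⟨u, rfl⟩
    (by simpa [IsIdempotentElem, sq, sub_eq_zero] using (hπ _).2 hu)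
  exact ⟨e, he, (hπ _).1 (by rw [map_sub, heu, sub_self])⟩

theorem exists_isIdempotentElem_isNilpotent_sub_aeval {N : ℤ} {C : Finset ℤ} {a : S}
    (hN : IsNilpotent (N : S)) (ha : IsNilpotent (∏ c ∈ C, (a - c))) {P : ℤ[X]}
    (hP : ∀ c ∈ C, N ∣ (P ^ 2 - P).eval c) :
    ∃ e, IsIdempotentElem e ∧ IsNilpotent (e - aeval a P) :=
  exists_isIdempotentElem_isNilpotent_sub <| by
    simpa using isNilpotent_aeval_of_forall_dvd_eval hN ha hP

/-- Over `𝔽₃` and `𝔽₅`, where `8 = 1 / 2`, the idempotents `8t² - 7t` and `8t² - 8t` are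
`(t² + t) / 2` and `(t² - t) / 2`; over `𝔽₂` they are `t` and `0`. -/
theorem exists_tripotent_isNilpotent_sub (h30 : IsNilpotent (30 : S)) {t : S}
    (ht : IsNilpotent (t ^ 3 - t)) : ∃ p, p ^ 3 = p ∧ IsNilpotent (p - t) := by
  have h30' : IsNilpotent ((30 : ℤ) : S) := by exact_mod_cast h30
  rw [← prod_Icc_neg_one_one_sub] at ht
  obtain ⟨e, he, he'⟩ := exists_isIdempotentElem_isNilpotent_sub_aeval h30' ht
    (P := 8 * X ^ 2 - 7 * X)
    (by simp only [eval_sub, eval_mul, eval_pow, eval_X, eval_ofNat]; decide)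
  obtain ⟨f, hf, hf'⟩ := exists_isIdempotentElem_isNilpotent_sub_aeval h30' ht
    (P := 8 * X ^ 2 - 8 * X)
    (by simp only [eval_sub, eval_mul, eval_pow, eval_X, eval_ofNat]; decide)
  refine ⟨e - f, by linear_combination (e + 1 - 3 * f) * he.eq + (3 * e - f - 1) * hf.eq, ?_⟩
  have hsub : e - f - t =
      (e - aeval t (8 * X ^ 2 - 7 * X : ℤ[X])) - (f - aeval t (8 * X ^ 2 - 8 * X : ℤ[X])) := by
    simp only [map_sub, map_mul, map_pow, aeval_X, map_ofNat]
    ring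
  rw [hsub]
  exact Commute.isNilpotent_sub (Commute.all _ _) he' hf'

/-- Over `𝔽₂` and `𝔽₃`, `a` is tripotent; over `𝔽₅`, `a = (2a - a³) + (a³ - a)`. The
idempotents `15, 10, 6` of `ℤ/30` glue these into `a = (7a - 6a³) + (6a³ - 6a)`. -/
theorem exists_tripotent_add_tripotent_add_isNilpotent (h30 : IsNilpotent (30 : S)) {a : S}
    (ha : IsNilpotent (∏ c ∈ Icc (-2 : ℤ) 2, (a - c))) :
    ∃ p q w, p ^ 3 = p ∧ q ^ 3 = q ∧ IsNilpotent w ∧ a = p + q + w := by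
  have h30' : IsNilpotent ((30 : ℤ) : S) := by exact_mod_cast h30
  have lift (T : ℤ[X]) (hT : ∀ c ∈ Icc (-2 : ℤ) 2, 30 ∣ (T ^ 3 - T).eval c) :
      ∃ p, p ^ 3 = p ∧ IsNilpotent (p - aeval a T) :=
    exists_tripotent_isNilpotent_sub h30 <| by
      simpa using isNilpotent_aeval_of_forall_dvd_eval h30' ha hT
  obtain ⟨p, hp, hp'⟩ := lift (7 * X - 6 * X ^ 3)
    (by simp only [eval_sub, eval_mul, eval_pow, eval_X, eval_ofNat]; decide)
  obtain ⟨q, hq, hq'⟩ := lift (6 * X ^ 3 - 6 * X)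
    (by simp only [eval_sub, eval_mul, eval_pow, eval_X, eval_ofNat]; decide)
  refine ⟨p, q, a - p - q, hp, hq, ?_, by ring⟩
  have hw : a - p - q =
      -((p - aeval a (7 * X - 6 * X ^ 3 : ℤ[X])) +
        (q - aeval a (6 * X ^ 3 - 6 * X : ℤ[X]))) := by
    simp only [map_sub, map_mul, map_pow, aeval_X, map_ofNat]
    ring
  rw [hw]
  exact (Commute.isNilpotent_add (Commute.all _ _) hp' hq').neg

/-- Write `s = a² ∈ {0, 1, 4}`. Over `𝔽₂` and `𝔽₃`, `s` is idempotent; over `𝔽₅`,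
`s = s² + 3 · 2 (s - s²)`. Gluing with the idempotents `15, 10, 6` of `ℤ/30` and correcting by
multiples of `30` gives `s = (36 s² - 35 s) + 3 (12 s - 12 s²)`. -/
theorem exists_sq_eq_idempotent_add_three_idempotent_add_isNilpotent (h30 : IsNilpotent (30 : S))
    {a : S} (ha : IsNilpotent (∏ c ∈ Icc (-2 : ℤ) 2, (a - c))) :
    ∃ e f w, IsIdempotentElem e ∧ IsIdempotentElem f ∧ IsNilpotent w ∧
      a ^ 2 = e + f + f + f + w := by
  have h30' : IsNilpotent ((30 : ℤ) : S) := by exact_mod_cast h30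
  obtain ⟨e, he, he'⟩ := exists_isIdempotentElem_isNilpotent_sub_aeval h30' ha
    (P := 36 * X ^ 4 - 35 * X ^ 2)
    (by simp only [eval_sub, eval_mul, eval_pow, eval_X, eval_ofNat]; decide)
  obtain ⟨f, hf, hf'⟩ := exists_isIdempotentElem_isNilpotent_sub_aeval h30' ha
    (P := 12 * X ^ 2 - 12 * X ^ 4)
    (by simp only [eval_sub, eval_mul, eval_pow, eval_X, eval_ofNat]; decide)
  refine ⟨e, f, a ^ 2 - e - 3 * f, he, hf, ?_, by ring⟩
  have hw : a ^ 2 - e - 3 * f = -((e - aeval a (36 * X ^ 4 - 35 * X ^ 2 : ℤ[X])) +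
      3 * (f - aeval a (12 * X ^ 2 - 12 * X ^ 4 : ℤ[X]))) := by
    simp only [map_sub, map_mul, map_pow, aeval_X, map_ofNat]
    ring
  rw [hw]
  exact (Commute.isNilpotent_add (Commute.all _ _) he'
    (Commute.isNilpotent_mul_left (Commute.all _ _) hf')).neg

theorem isNilpotent_prod_Icc_sub_of_tripotent {p q w : S} (hp : p ^ 3 = p) (hq : q ^ 3 = q)
    (hw : IsNilpotent w) : IsNilpotent (∏ c ∈ Icc (-2 : ℤ) 2, (p + q + w - c)) := by
  refine isNilpotent_of_forall_map_eq_zero fun D _ _ φ => ?_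
  have tripotent {x : S} (hx : x ^ 3 = x) : ∃ c ∈ Icc (-1 : ℤ) 1, φ x = c :=
    exists_mem_map_eq_intCast (by rw [prod_Icc_neg_one_one_sub, hx, sub_self]; exact .zero) φ
  obtain ⟨i, hi, hpi⟩ := tripotent hp
  obtain ⟨j, hj, hqj⟩ := tripotent hq
  simp only [map_prod, map_sub, map_add, map_intCast, hpi, hqj, hw.map_eq_zero φ, add_zero]
  refine prod_eq_zero (i := i + j) ?_ (by push_cast; ring)
  simp only [mem_Icc] at hi hj ⊢
  omega

theorem isNilpotent_prod_Icc_sub_of_isIdempotentElem {e f g k w : S} (he : IsIdempotentElem e)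
    (hf : IsIdempotentElem f) (hg : IsIdempotentElem g) (hk : IsIdempotentElem k)
    (hw : IsNilpotent w) : IsNilpotent (∏ c ∈ Icc (0 : ℤ) 4, (e + f + g + k + w - c)) := by
  refine isNilpotent_of_forall_map_eq_zero fun D _ _ φ => ?_
  have idempotent {x : S} (hx : IsIdempotentElem x) : ∃ c ∈ Icc (0 : ℤ) 1, φ x = c :=
    exists_mem_map_eq_intCast (by rw [prod_Icc_zero_one_sub, sq, hx.eq, sub_self]; exact .zero) φ
  obtain ⟨i₁, hi₁, he₁⟩ := idempotent he
  obtain ⟨i₂, hi₂, hf₂⟩ := idempotent hf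
  obtain ⟨i₃, hi₃, hg₃⟩ := idempotent hg
  obtain ⟨i₄, hi₄, hk₄⟩ := idempotent hk
  simp only [map_prod, map_sub, map_add, map_intCast, he₁, hf₂, hg₃, hk₄, hw.map_eq_zero φ,
    add_zero]
  refine prod_eq_zero (i := i₁ + i₂ + i₃ + i₄) ?_ (by push_cast; ring)
  simp only [mem_Icc] at hi₁ hi₂ hi₃ hi₄ ⊢
  omega

theorem thirty_dvd_prod_Icc_sub (n : ℤ) : 30 ∣ ∏ c ∈ Icc (-2 : ℤ) 2, (n - c) := by
  have h : ∀ x : ZMod 30, ∏ c ∈ Icc (-2 : ℤ) 2, (x - c) = 0 := by decide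
  exact (ZMod.intCast_zmod_eq_zero_iff_dvd _ 30).1 (by push_cast; exact h n)

/-- `2a = m' - m - 1`, so `a` is an integer when `2` is invertible; in characteristic `2`,
`(a - m)² = m (m + 1) = 0`. -/
theorem exists_eq_intCast_of_sq_eq_intCast {D : Type*} [CommRing D] [IsDomain D]
    (h30 : (30 : D) = 0) {a : D} {m m' : ℤ} (hm : a ^ 2 = m) (hm' : (a + 1) ^ 2 = m') :
    ∃ c : ℤ, a = c := by
  have h2a : 2 * a = m' - m - 1 := by linear_combination hm' - hm
  have hchar : (2 : D) = 0 ∨ (3 : D) = 0 ∨ (5 : D) = 0 := by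
    have h235 : (2 : D) * 3 * 5 = 0 := by rw [← h30]; norm_num
    simpa [mul_eq_zero, or_assoc] using h235
  rcases hchar with h2 | h3 | h5
  · obtain ⟨k, hk⟩ := Int.even_mul_succ_self m
    have hk' : (m : D) * (m + 1) = k + k := by exact_mod_cast congrArg (Int.cast : ℤ → D) hk
    have hsq : (a - m) ^ 2 = 0 := by linear_combination hm + hk' + (k - a * m) * h2
    exact ⟨m, sub_eq_zero.1 (pow_eq_zero_iff two_ne_zero |>.1 hsq)⟩
  · exact ⟨2 * (m' - m - 1), by push_cast; linear_combination 2 * h2a - a * h3⟩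
  · exact ⟨3 * (m' - m - 1), by push_cast; linear_combination 3 * h2a - a * h5⟩

theorem isNilpotent_prod_Icc_sub_of_sq (h30 : IsNilpotent (30 : S)) {a : S}
    (h₀ : IsNilpotent (∏ c ∈ Icc (0 : ℤ) 4, (a ^ 2 - c)))
    (h₁ : IsNilpotent (∏ c ∈ Icc (0 : ℤ) 4, ((a + 1) ^ 2 - c))) :
    IsNilpotent (∏ c ∈ Icc (-2 : ℤ) 2, (a - c)) := by
  refine isNilpotent_of_forall_map_eq_zero fun D _ _ φ => ?_
  have h30D : (30 : D) = 0 := by rw [← map_ofNat φ 30]; exact h30.map_eq_zero φ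
  obtain ⟨m, -, hm⟩ := exists_mem_map_eq_intCast h₀ φ
  obtain ⟨m', -, hm'⟩ := exists_mem_map_eq_intCast h₁ φ
  obtain ⟨n, hn⟩ := exists_eq_intCast_of_sq_eq_intCast h30D (a := φ a)
    (by simpa using hm) (by simpa using hm')
  obtain ⟨k, hk⟩ := thirty_dvd_prod_Icc_sub n
  have hnD : ((∏ c ∈ Icc (-2 : ℤ) 2, (n - c) : ℤ) : D) = 0 := by
    rw [hk, Int.cast_mul, Int.cast_ofNat, h30D, zero_mul]
  simpa [map_prod, hn] using hnD

end CommRing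

section Ring

open scoped IsMulCommutative

variable {R : Type u} [Ring R]

theorem IsNilpotent.intCast_of_dvd_pow {m n : ℤ} {k : ℕ} (hm : IsNilpotent (m : R))
    (h : m ∣ n ^ k) : IsNilpotent (n : R) := by
  obtain ⟨d, hd⟩ := h
  refine IsNilpotent.of_pow (m := k) ?_
  rw [← Int.cast_pow, hd, Int.cast_mul]
  exact (Int.cast_commute m (d : R)).isNilpotent_mul_right hm

theorem IsNilpotent.isUnit_intCast_of_isCoprime {m n : ℤ} (hm : IsNilpotent (m : R))
    (h : IsCoprime n m) : IsUnit (n : R) := by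
  obtain ⟨u, v, huv⟩ := h
  have hu : (u : R) * n = 1 - v * m := by
    rw [← Int.cast_mul, ← Int.cast_mul, ← Int.cast_one, ← Int.cast_sub, ← huv,
      add_sub_cancel_right]
  have : IsUnit ((u : R) * n) :=
    hu ▸ ((Int.cast_commute v (m : R)).isNilpotent_mul_left hm).isUnit_one_sub
  exact ((Int.cast_commute u (n : R)).isUnit_mul_iff.1 this).2

theorem isNilpotent_intCast_of_isNilpotent_aeval {n m : ℤ} {f : ℤ[X]}
    (h : IsNilpotent (aeval (n : R) f)) (hm : f.eval n = m) : IsNilpotent (m : R) := by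
  rwa [aeval_def, eval₂_at_intCast, Int.cast_id, hm, eq_intCast] at h

theorem isNilpotent_thirty_and_isUnit_seven
    (h : IsNilpotent (aeval (3 : R) (∏ c ∈ Icc (-2 : ℤ) 2, (X - C c)))) :
    IsNilpotent (30 : R) ∧ IsUnit (7 : R) := by
  have h120 : IsNilpotent ((120 : ℤ) : R) :=
    isNilpotent_intCast_of_isNilpotent_aeval (n := 3) (by exact_mod_cast h)
      (by simp only [eval_prod, eval_sub, eval_X, eval_C]; decide)
  have h7 : IsUnit ((7 : ℤ) : R) :=
    h120.isUnit_intCast_of_isCoprime (by norm_num [Int.isCoprime_iff_gcd_eq_one])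
  exact ⟨by exact_mod_cast h120.intCast_of_dvd_pow (n := 30) (k := 3) (by norm_num),
    by exact_mod_cast h7⟩

theorem isNilpotent_thirty_of_isUnit_seven (h7 : IsUnit (7 : R))
    (h : IsNilpotent (aeval (9 : R) (∏ c ∈ Icc (0 : ℤ) 4, (X - C c)))) :
    IsNilpotent (30 : R) := by
  have h15120 : IsNilpotent ((7 * 2160 : ℤ) : R) :=
    isNilpotent_intCast_of_isNilpotent_aeval (n := 9) (by exact_mod_cast h)
      (by simp only [eval_prod, eval_sub, eval_X, eval_C]; decide)
  rw [Int.cast_mul] at h15120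
  have h2160 : IsNilpotent ((2160 : ℤ) : R) :=
    (IsUnit.isNilpotent_unit_mul_of_commute_iff (by exact_mod_cast h7)
      (Int.cast_commute _ _)).1 h15120
  exact_mod_cast h2160.intCast_of_dvd_pow (n := 30) (k := 4) (by norm_num)

theorem Subring.commute_coe {T : Subring R} [IsMulCommutative T] (x y : T) :
    Commute (x : R) y :=
  congrArg Subtype.val (mul_comm x y : x * y = y * x)

theorem Subring.isNilpotent_coe_iff {T : Subring R} {x : T} :
    IsNilpotent (x : R) ↔ IsNilpotent x :=
  IsNilpotent.map_iff (f := T.subtype) Subtype.val_injective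

theorem Subring.isNilpotent_aeval_coe_iff {T : Subring R} {x : T} {f : ℤ[X]} :
    IsNilpotent (aeval (x : R) f) ↔ IsNilpotent (aeval x f) := by
  rw [← isNilpotent_coe_iff]
  exact Iff.of_eq (congrArg IsNilpotent (aeval_algHom_apply T.subtype.toIntAlgHom x f))

theorem isNilpotent_aeval_prod_of_tripotent_of_commute {p q w : R} (hp : p ^ 3 = p)
    (hq : q ^ 3 = q) (hw : IsNilpotent w) (hpq : Commute p q) (hpw : Commute p w)
    (hqw : Commute q w) :
    IsNilpotent (aeval (p + q + w) (∏ c ∈ Icc (-2 : ℤ) 2, (X - C c))) := by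
  let T := Subring.closure ({p, q, w} : Set R)
  have : IsMulCommutative T := Subring.isMulCommutative_closure (by
    simp only [Set.mem_insert_iff, Set.mem_singleton_iff]
    rintro _ (rfl | rfl | rfl) _ (rfl | rfl | rfl) <;>
      first | rfl | assumption | exact Eq.symm ‹_›)
  let P : T := ⟨p, Subring.subset_closure (by simp)⟩
  let Q : T := ⟨q, Subring.subset_closure (by simp)⟩
  let W : T := ⟨w, Subring.subset_closure (by simp)⟩
  have := isNilpotent_prod_Icc_sub_of_tripotent (p := P) (q := Q) (Subtype.ext hp) (Subtype.ext hq)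
    ((Subring.isNilpotent_coe_iff (x := W)).1 hw)
  rwa [← aeval_prod_X_sub_C, ← Subring.isNilpotent_aeval_coe_iff] at this

theorem isNilpotent_aeval_prod_of_isIdempotentElem_of_commute {e f g k w : R}
    (he : IsIdempotentElem e) (hf : IsIdempotentElem f) (hg : IsIdempotentElem g)
    (hk : IsIdempotentElem k) (hw : IsNilpotent w) (hef : Commute e f) (heg : Commute e g)
    (hek : Commute e k) (hew : Commute e w) (hfg : Commute f g) (hfk : Commute f k)
    (hfw : Commute f w) (hgk : Commute g k) (hgw : Commute g w) (hkw : Commute k w) :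
    IsNilpotent (aeval (e + f + g + k + w) (∏ c ∈ Icc (0 : ℤ) 4, (X - C c))) := by
  let T := Subring.closure ({e, f, g, k, w} : Set R)
  have : IsMulCommutative T := Subring.isMulCommutative_closure (by
    simp only [Set.mem_insert_iff, Set.mem_singleton_iff]
    rintro _ (rfl | rfl | rfl | rfl | rfl) _ (rfl | rfl | rfl | rfl | rfl) <;>
      first | rfl | assumption | exact Eq.symm ‹_›)
  let E : T := ⟨e, Subring.subset_closure (by simp)⟩
  let F : T := ⟨f, Subring.subset_closure (by simp)⟩
  let G : T := ⟨g, Subring.subset_closure (by simp)⟩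
  let K : T := ⟨k, Subring.subset_closure (by simp)⟩
  let W : T := ⟨w, Subring.subset_closure (by simp)⟩
  have := isNilpotent_prod_Icc_sub_of_isIdempotentElem (e := E) (f := F) (g := G) (k := K)
    (Subtype.ext he) (Subtype.ext hf) (Subtype.ext hg) (Subtype.ext hk)
    ((Subring.isNilpotent_coe_iff (x := W)).1 hw)
  rwa [← aeval_prod_X_sub_C, ← Subring.isNilpotent_aeval_coe_iff] at this

theorem exists_commute_sq_eq_idempotent_add_three_idempotent_add_isNilpotent
    (h30 : IsNilpotent (30 : R)) {x : R}
    (hx : IsNilpotent (aeval x (∏ c ∈ Icc (-2 : ℤ) 2, (X - C c)))) :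
    ∃ e f w : R, IsIdempotentElem e ∧ IsIdempotentElem f ∧ IsNilpotent w ∧
      Commute e f ∧ Commute e w ∧ Commute f w ∧ x ^ 2 = e + f + f + f + w := by
  let T := Subring.closure ({x} : Set R)
  have : IsMulCommutative T := Subring.isMulCommutative_closure (by simp)
  let A : T := ⟨x, Subring.subset_closure rfl⟩
  have hA : IsNilpotent (aeval A (∏ c ∈ Icc (-2 : ℤ) 2, (X - C c))) :=
    Subring.isNilpotent_aeval_coe_iff.1 hx
  rw [aeval_prod_X_sub_C] at hA
  obtain ⟨e, f, w, he, hf, hw, hsq⟩ :=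
    exists_sq_eq_idempotent_add_three_idempotent_add_isNilpotent
      ((Subring.isNilpotent_coe_iff (x := (30 : T))).1 (by exact_mod_cast h30)) hA
  exact ⟨e, f, w, congrArg Subtype.val he, congrArg Subtype.val hf,
    Subring.isNilpotent_coe_iff.2 hw, Subring.commute_coe e f, Subring.commute_coe e w,
    Subring.commute_coe f w, congrArg Subtype.val hsq⟩

theorem exists_commute_eq_tripotent_add_tripotent_add_isNilpotent
    (h30 : IsNilpotent (30 : R)) {a : R}
    (h₀ : IsNilpotent (aeval (a ^ 2) (∏ c ∈ Icc (0 : ℤ) 4, (X - C c))))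
    (h₁ : IsNilpotent (aeval ((a + 1) ^ 2) (∏ c ∈ Icc (0 : ℤ) 4, (X - C c)))) :
    ∃ p q w : R, p ^ 3 = p ∧ q ^ 3 = q ∧ IsNilpotent w ∧
      Commute p q ∧ Commute p w ∧ Commute q w ∧ a = p + q + w := by
  let T := Subring.closure ({a} : Set R)
  have : IsMulCommutative T := Subring.isMulCommutative_closure (by simp)
  let A : T := ⟨a, Subring.subset_closure rfl⟩
  have h30T : IsNilpotent (30 : T) := Subring.isNilpotent_coe_iff.1 (by exact_mod_cast h30)
  have h₀' := (Subring.isNilpotent_aeval_coe_iff (x := A ^ 2)).1 h₀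
  have h₁' := (Subring.isNilpotent_aeval_coe_iff (x := (A + 1) ^ 2)).1 h₁
  rw [aeval_prod_X_sub_C] at h₀' h₁'
  obtain ⟨p, q, w, hp, hq, hw, hsum⟩ :=
    exists_tripotent_add_tripotent_add_isNilpotent h30T
      (isNilpotent_prod_Icc_sub_of_sq h30T h₀' h₁')
  exact ⟨p, q, w, congrArg Subtype.val hp, congrArg Subtype.val hq,
    Subring.isNilpotent_coe_iff.2 hw, Subring.commute_coe p q, Subring.commute_coe p w,
    Subring.commute_coe q w, congrArg Subtype.val hsum⟩

end Ring

theorem stmt_12 (R : Type*) [Ring R] :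
    ZhouNilClean R ↔
      (IsUnit (7 : R) ∧
        ∀ x : R, ∃ e f g k w : R, IsIdempotentElem e ∧ IsIdempotentElem f ∧
          IsIdempotentElem g ∧ IsIdempotentElem k ∧ IsNilpotent w ∧
          Commute e f ∧ Commute e g ∧ Commute e k ∧ Commute e w ∧
          Commute f g ∧ Commute f k ∧ Commute f w ∧
          Commute g k ∧ Commute g w ∧ Commute k w ∧ x ^ 2 = e + f + g + k + w) := by
  constructor
  · intro h
    have hroot (x : R) : IsNilpotent (aeval x (∏ c ∈ Icc (-2 : ℤ) 2, (X - C c))) := by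
      obtain ⟨p, q, w, hp, hq, hw, hpq, hpw, hqw, rfl⟩ := h x
      exact isNilpotent_aeval_prod_of_tripotent_of_commute hp hq hw hpq hpw hqw
    obtain ⟨h30, h7⟩ := isNilpotent_thirty_and_isUnit_seven (hroot 3)
    refine ⟨h7, fun x => ?_⟩
    obtain ⟨e, f, w, he, hf, hw, hef, hew, hfw, hx⟩ :=
      exists_commute_sq_eq_idempotent_add_three_idempotent_add_isNilpotent h30 (hroot x)
    exact ⟨e, f, f, f, w, he, hf, hf, hf, hw, hef, hef, hef, hew, .refl f, .refl f, hfw, .refl f,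
      hfw, hfw, hx⟩
  · rintro ⟨h7, hsq⟩
    have hroot (x : R) : IsNilpotent (aeval (x ^ 2) (∏ c ∈ Icc (0 : ℤ) 4, (X - C c))) := by
      obtain ⟨e, f, g, k, w, he, hf, hg, hk, hw, hef, heg, hek, hew, hfg, hfk, hfw, hgk, hgw, hkw,
        hx⟩ := hsq x
      rw [hx]
      exact isNilpotent_aeval_prod_of_isIdempotentElem_of_commute he hf hg hk hw hef heg hek hew
        hfg hfk hfw hgk hgw hkw
    have h30 := isNilpotent_thirty_of_isUnit_seven h7 (by convert hroot 3 using 2; norm_num)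
    exact fun a => exists_commute_eq_tripotent_add_tripotent_add_isNilpotent h30 (hroot a)
      (hroot (a + 1))
end

section
/- Let R be a ring in which every square element is the sum of two tripotents and a nilpotent that pairwise commute. Then 30 is nilpotent in R. -/
lemma stmt_16_aux {A : Type*} [CommRing A] (p q w : A) (hp : p ^ 3 = p) (hq : q ^ 3 = q)
    {n : ℕ} (hw : w ^ n = 0) :
    ((p + q + w) ^ 5 - 5 * (p + q + w) ^ 3 + 4 * (p + q + w)) ^ n = 0 := by
  have key : (p + q + w) ^ 5 - 5 * (p + q + w) ^ 3 + 4 * (p + q + w)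
      = w * (5*(p+q)^4 + 10*(p+q)^3*w + 10*(p+q)^2*w^2 + 5*(p+q)*w^3 + w^4
          - 15*(p+q)^2 - 15*(p+q)*w - 5*w^2 + 4) := by
    linear_combination (p^2 + 5*p*q + 10*q^2 - 4) * hp + (q^2 + 5*p*q + 10*p^2 - 4) * hq
  rw [key, mul_pow, hw, zero_mul]

theorem stmt_16 (R : Type*) [Ring R]
    (h : ∀ x : R, ∃ p q w : R, p ^ 3 = p ∧ q ^ 3 = q ∧ IsNilpotent w ∧
      Commute p q ∧ Commute p w ∧ Commute q w ∧ x ^ 2 = p + q + w) :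
    IsNilpotent (30 : R) := by
  obtain ⟨p, q, w, hp, hq, hw, hpq, hpw, hqw, hx⟩ := h 2
  set s : Set R := {p, q, w} with hs
  have hcomm : ∀ x ∈ s, ∀ y ∈ s, x * y = y * x := by
    rintro x (rfl | rfl | rfl) y (rfl | rfl | rfl) <;>
      first
        | rfl
        | exact hpq | exact hpq.symm
        | exact hpw | exact hpw.symm
        | exact hqw | exact hqw.symm
  letI : CommRing (Subring.closure s) := Subring.closureCommRingOfComm hcomm
  have hpS : p ∈ Subring.closure s := Subring.subset_closure (by simp [hs])
  have hqS : q ∈ Subring.closure s := Subring.subset_closure (by simp [hs])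
  have hwS : w ∈ Subring.closure s := Subring.subset_closure (by simp [hs])
  set P : Subring.closure s := ⟨p, hpS⟩
  set Q : Subring.closure s := ⟨q, hqS⟩
  set W : Subring.closure s := ⟨w, hwS⟩
  have hP : P ^ 3 = P := Subtype.ext (by rw [SubmonoidClass.coe_pow]; exact hp)
  have hQ : Q ^ 3 = Q := Subtype.ext (by rw [SubmonoidClass.coe_pow]; exact hq)
  obtain ⟨n, hn⟩ := hw
  have hWn : W ^ n = 0 := Subtype.ext (by rw [SubmonoidClass.coe_pow]; exact hn)
  have key := stmt_16_aux P Q W hP hQ hWn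
  -- transfer to R
  have keyR : ((p + q + w) ^ 5 - 5 * (p + q + w) ^ 3 + 4 * (p + q + w)) ^ n = 0 := by
    have := congrArg (Subtype.val) key
    push_cast at this
    exact this
  have h4 : (4 : R) = p + q + w := by
    have h2 : (2 : R) ^ 2 = 4 := by norm_num
    rw [← h2, hx]
  have h720 : (720 : R) ^ n = 0 := by
    have e : (720 : R) = (p + q + w) ^ 5 - 5 * (p + q + w) ^ 3 + 4 * (p + q + w) := by
      rw [← h4]; norm_num
    rw [e]; exact keyR
  -- 30 ^ 4 = 1125 * 720 and numerals commute
  refine ⟨4 * n, ?_⟩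
  have h30 : (30 : R) ^ 4 = 1125 * 720 := by norm_num
  have hc : Commute (1125 : R) 720 := by
    simpa using (Nat.cast_commute (1125 : ℕ) ((720 : ℕ) : R))
  calc (30 : R) ^ (4 * n) = ((1125 : R) * 720) ^ n := by rw [pow_mul, h30]
    _ = 1125 ^ n * 720 ^ n := hc.mul_pow n
    _ = 0 := by rw [h720, mul_zero]
end

section
/- In the field with 9 elements (GF(9)), every square element is a 5-potent, so every square element is the sum of a 5-potent and a nilpotent that commute, yet GF(9) is not Zhou nil-clean (indeed, there is an element c of GF(9) such that c - c^5 is not nilpotent). -/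
noncomputable instance : Fintype (GaloisField 3 2) := Fintype.ofFinite _

lemma gf9_card : Fintype.card (GaloisField 3 2) = 9 := by
  rw [← Nat.card_eq_fintype_card, GaloisField.card 3 2 (by norm_num)]; norm_num

lemma gf9_pow9 (x : GaloisField 3 2) : x ^ 9 = x := by
  have h := FiniteField.pow_card x
  rwa [gf9_card] at h

lemma gf9_sq_pow5 (x : GaloisField 3 2) : (x ^ 2) ^ 5 = x ^ 2 := by
  have h := gf9_pow9 x
  calc (x ^ 2) ^ 5 = x ^ 9 * x := by ring
    _ = x * x := by rw [h]
    _ = x ^ 2 := by ring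

lemma gf9_exists_bad : ∃ c : GaloisField 3 2, c ^ 5 ≠ c := by
  obtain ⟨ζ, hζ⟩ := IsCyclic.exists_generator (α := (GaloisField 3 2)ˣ)
  have horder : orderOf ζ = 8 := by
    rw [orderOf_eq_card_of_forall_mem_zpowers hζ, Nat.card_units,
      GaloisField.card 3 2 (by norm_num)]; norm_num
  have h4 : ζ ^ 4 ≠ 1 := by
    intro h
    have := orderOf_dvd_of_pow_eq_one h
    rw [horder] at this
    omega
  refine ⟨(ζ : GaloisField 3 2), ?_⟩
  intro h
  apply h4
  have hz : (ζ : GaloisField 3 2) ≠ 0 := Units.ne_zero ζ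
  have h4' : (ζ : GaloisField 3 2) ^ 4 = 1 := by
    have : (ζ : GaloisField 3 2) * ((ζ : GaloisField 3 2) ^ 4 - 1) = 0 := by
      rw [mul_sub]; rw [show (ζ : GaloisField 3 2) * (ζ : GaloisField 3 2) ^ 4 = (ζ : GaloisField 3 2) ^ 5 by ring, h]; ring
    rcases mul_eq_zero.mp this with h' | h'
    · exact absurd h' hz
    · linear_combination h'
  ext
  push_cast
  exact h4'

theorem stmt_19 :
    (∀ x : GaloisField 3 2, (x ^ 2) ^ 5 = x ^ 2) ∧
    (∀ x : GaloisField 3 2, ∃ p w : GaloisField 3 2,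
      p ^ 5 = p ∧ IsNilpotent w ∧ Commute p w ∧ x ^ 2 = p + w) ∧
    ¬ ZhouNilClean (GaloisField 3 2) ∧
    ∃ c : GaloisField 3 2, ¬ IsNilpotent (c - c ^ 5) := by
  obtain ⟨c, hc⟩ := gf9_exists_bad
  refine ⟨gf9_sq_pow5, fun x => ⟨x ^ 2, 0, gf9_sq_pow5 x, IsNilpotent.zero,
    Commute.all _ _, by ring⟩, ?_, ⟨c, ?_⟩⟩
  · intro h
    obtain ⟨p, q, w, hp, hq, hw, _, _, _, hsum⟩ := h c
    have hw0 : w = 0 := hw.eq_zero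
    have hcpq : c = p + q := by rw [hsum, hw0, add_zero]
    have h3 : c ^ 3 = c := by
      rw [hcpq, add_pow_char (p := 3), hp, hq]
    apply hc
    calc c ^ 5 = c ^ 3 * c ^ 2 := by ring
      _ = c * c ^ 2 := by rw [h3]
      _ = c ^ 3 := by ring
      _ = c := h3
  · intro h
    exact hc (by have := h.eq_zero; linear_combination -this)
end
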